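/- arXiv:2211.06744 — 8 statements merged into one kernel-verified Lean document; each statement's English description precedes it below -/
import Mathlib

section
/- Let G be a connected graph with n vertices and m edges, maximum degree Δ and minimum degree δ. Then S(G) ≤ (n/2)·(Δ − δ), with equality if and only if G is regular or a balanced bidegreed graph. -/
open Finset

/-- Degree deviation `S(G) = Σ_v |d(v) − 2m/n|`. -/
noncomputable def degS {V : Type*} [Fintype V] [DecidableEq V] (G : SimpleGraph V)
    [DecidableRel G.Adj] : ℝ :=
  ∑ v : V, |(G.degree v : ℝ) - 2 * G.edgeFinset.card / Fintype.card V|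

/-- Degree variance `Var(G) = (1/n)·Σ_v (d(v) − 2m/n)²`. -/
noncomputable def degVar {V : Type*} [Fintype V] [DecidableEq V] (G : SimpleGraph V)
    [DecidableRel G.Adj] : ℝ :=
  (1 / (Fintype.card V : ℝ)) *
    ∑ v : V, ((G.degree v : ℝ) - 2 * G.edgeFinset.card / Fintype.card V) ^ 2

/-- `N_k`: the number of vertices of degree `k`. -/
def Nk {V : Type*} [Fintype V] [DecidableEq V] (G : SimpleGraph V)
    [DecidableRel G.Adj] (k : ℕ) : ℕ :=
  Finset.card (Finset.filter (fun v : V => G.degree v = k) Finset.univ)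

/-- A graph is bidegreed if its vertices take exactly two distinct degrees. -/
def IsBidegreed {V : Type*} [Fintype V] [DecidableEq V] (G : SimpleGraph V)
    [DecidableRel G.Adj] : Prop :=
  (Finset.image (fun v : V => G.degree v) Finset.univ).card = 2

/-- A bidegreed graph on `n` vertices is balanced if `N_Δ = N_δ = n/2`. -/
def IsBalancedBidegreed {V : Type*} [Fintype V] [DecidableEq V] (G : SimpleGraph V)
    [DecidableRel G.Adj] : Prop :=
  IsBidegreed G ∧ 2 * Nk G G.maxDegree = Fintype.card V ∧
    2 * Nk G G.minDegree = Fintype.card V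


set_option maxHeartbeats 1000000

private lemma core {V : Type*} [Fintype V] (d : V → ℝ) (a Δ δ : ℝ)
    (hn : 0 < (Fintype.card V : ℝ))
    (hdΔ : ∀ v, d v ≤ Δ) (hdδ : ∀ v, δ ≤ d v)
    (hsum : ∑ v, d v = (Fintype.card V : ℝ) * a) :
    ∑ v, |d v - a| ≤ (Fintype.card V : ℝ) / 2 * (Δ - δ) ∧
    (∑ v, |d v - a| = (Fintype.card V : ℝ) / 2 * (Δ - δ) → δ < Δ →
      2 * a = Δ + δ ∧ ∀ v, d v = Δ ∨ d v = δ) := by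
  classical
  set n : ℝ := (Fintype.card V : ℝ) with hndef
  set P := univ.filter (fun v => a ≤ d v) with hPdef
  set Q := univ.filter (fun v => ¬ a ≤ d v) with hQdef
  have hmemP : ∀ v, v ∈ P ↔ a ≤ d v := by intro v; simp [hPdef]
  have hmemQ : ∀ v, v ∈ Q ↔ ¬ a ≤ d v := by intro v; simp [hQdef]
  have hpqN : P.card + Q.card = Fintype.card V := by
    rw [hPdef, hQdef]
    rw [card_filter_add_card_filter_not, card_univ]
  have hpq : (P.card : ℝ) + Q.card = n := by rw [hndef]; exact_mod_cast hpqN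
  have hPa : ∑ v ∈ P, (d v - a) + ∑ v ∈ Q, (d v - a) = 0 := by
    rw [sum_filter_add_sum_filter_not, Finset.sum_sub_distrib, hsum, sum_const, card_univ,
      nsmul_eq_mul]
    ring
  have hSeq : ∑ v, |d v - a| = ∑ v ∈ P, (d v - a) + ∑ v ∈ Q, (a - d v) := by
    rw [← sum_filter_add_sum_filter_not univ (fun v => a ≤ d v) (fun v => |d v - a|)]
    congr 1
    · exact sum_congr rfl fun v hv => abs_of_nonneg (by
        have := (hmemP v).mp hv; linarith)
    · refine sum_congr rfl fun v hv => ?_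
      have h := (hmemQ v).mp hv
      push_neg at h
      rw [abs_of_neg (by linarith)]
      ring
  have hQP : ∑ v ∈ Q, (a - d v) = ∑ v ∈ P, (d v - a) := by
    have h : ∑ v ∈ Q, (a - d v) = - ∑ v ∈ Q, (d v - a) := by
      rw [← Finset.sum_neg_distrib]
      exact sum_congr rfl fun v _ => by ring
    linarith
  have hS2 : ∑ v, |d v - a| = 2 * ∑ v ∈ P, (d v - a) := by rw [hSeq, hQP]; ring
  set SP := ∑ v ∈ P, (d v - a) with hSPdef
  have h1 : SP ≤ (P.card : ℝ) * (Δ - a) := by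
    calc SP ≤ ∑ _v ∈ P, (Δ - a) := sum_le_sum fun v _ => by linarith [hdΔ v]
    _ = P.card * (Δ - a) := by rw [sum_const, nsmul_eq_mul]
  have h2 : SP ≤ (Q.card : ℝ) * (a - δ) := by
    rw [← hQP]
    calc ∑ v ∈ Q, (a - d v) ≤ ∑ _v ∈ Q, (a - δ) := sum_le_sum fun v _ => by linarith [hdδ v]
    _ = Q.card * (a - δ) := by rw [sum_const, nsmul_eq_mul]
  have haΔ : a ≤ Δ := by
    have h : n * a ≤ n * Δ := by
      rw [← hsum]
      calc ∑ v, d v ≤ ∑ _v : V, Δ := sum_le_sum fun v _ => hdΔ v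
      _ = n * Δ := by rw [sum_const, card_univ, nsmul_eq_mul]
    exact le_of_mul_le_mul_left h hn
  have hδa : δ ≤ a := by
    have h : n * δ ≤ n * a := by
      rw [← hsum]
      calc (n : ℝ) * δ = ∑ _v : V, δ := by rw [sum_const, card_univ, nsmul_eq_mul]
      _ ≤ ∑ v, d v := sum_le_sum fun v _ => hdδ v
    exact le_of_mul_le_mul_left h hn
  have hδΔ : δ ≤ Δ := le_trans hδa haΔ
  have hchain : (Δ - δ) * SP ≤ n * ((Δ - a) * (a - δ)) := by
    have e1 : (a - δ) * SP ≤ (a - δ) * ((P.card : ℝ) * (Δ - a)) :=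
      mul_le_mul_of_nonneg_left h1 (by linarith)
    have e2 : (Δ - a) * SP ≤ (Δ - a) * ((Q.card : ℝ) * (a - δ)) :=
      mul_le_mul_of_nonneg_left h2 (by linarith)
    have e3 : ((P.card : ℝ) + Q.card) * ((Δ - a) * (a - δ)) = n * ((Δ - a) * (a - δ)) := by
      rw [hpq]
    linarith [e1, e2, e3]
  have hAM : n * ((Δ - a) * (a - δ)) ≤ n * ((Δ - δ) ^ 2 / 4) := by
    have h4 : (Δ - a) * (a - δ) ≤ (Δ - δ) ^ 2 / 4 := by nlinarith [sq_nonneg (Δ + δ - 2 * a)]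
    exact mul_le_mul_of_nonneg_left h4 (le_of_lt hn)
  constructor
  · rcases eq_or_lt_of_le hδΔ with h | h
    · have haδ : a = δ := le_antisymm (h ▸ haΔ) hδa
      have hall : ∀ v, |d v - a| = 0 := fun v => by
        have h1 := hdΔ v; have h2 := hdδ v
        have : d v = a := by rw [haδ]; exact le_antisymm (by rw [h]; exact h1) h2
        simp [this]
      rw [Finset.sum_congr rfl fun v _ => hall v, sum_const, smul_zero, ← h]
      have : n / 2 * (δ - δ) = 0 := by ring
      linarith
    · have hmul : (2 * SP) * (Δ - δ) ≤ (n / 2 * (Δ - δ)) * (Δ - δ) := by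
        nlinarith [hchain, hAM]
      rw [hS2]
      exact le_of_mul_le_mul_right hmul (by linarith)
  · intro heq hlt
    rw [hS2] at heq
    have hSPval : SP = n * (Δ - δ) / 4 := by linarith
    have hchain' : (Δ - δ) * (n * (Δ - δ) / 4) ≤ n * ((Δ - a) * (a - δ)) := by
      rw [← hSPval]; exact hchain
    have ha2 : 2 * a = Δ + δ := by
      have h0 : n * (Δ + δ - 2 * a) ^ 2 ≤ 0 := by linarith [hchain']
      have hxle : (Δ + δ - 2 * a) ^ 2 ≤ 0 := by
        rcases le_or_gt ((Δ + δ - 2 * a) ^ 2) 0 with h | h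
        · exact h
        · exfalso; nlinarith [h0, hn, h]
      have hx0 : (Δ + δ - 2 * a) ^ 2 = 0 := le_antisymm hxle (sq_nonneg _)
      have := pow_eq_zero_iff (two_ne_zero) |>.mp hx0
      linarith
  -- p = q = n/2
    have hΔa : Δ - a = (Δ - δ) / 2 := by linarith
    have haδ2 : a - δ = (Δ - δ) / 2 := by linarith
    rw [hΔa] at h1
    rw [haδ2] at h2
    have hple : n / 2 ≤ (P.card : ℝ) := by
      have h' : (n / 2) * (Δ - δ) ≤ (P.card : ℝ) * (Δ - δ) := by linarith [h1, hSPval]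
      exact le_of_mul_le_mul_right h' (by linarith)
    have hqle : n / 2 ≤ (Q.card : ℝ) := by
      have h' : (n / 2) * (Δ - δ) ≤ (Q.card : ℝ) * (Δ - δ) := by linarith [h2, hSPval]
      exact le_of_mul_le_mul_right h' (by linarith)
    have hp : (P.card : ℝ) = n / 2 := by linarith
    have hq : (Q.card : ℝ) = n / 2 := by linarith
    have hPeq : ∀ v ∈ P, d v = Δ := by
      have hsum_eq : ∑ v ∈ P, (d v - a) = ∑ _v ∈ P, (Δ - a) := by
        rw [sum_const, nsmul_eq_mul, ← hSPdef, hSPval, hp, hΔa]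
        ring
      have h := (sum_eq_sum_iff_of_le (fun v _ => by linarith [hdΔ v] :
        ∀ v ∈ P, d v - a ≤ Δ - a)).mp hsum_eq
      intro v hv
      have := h v hv
      linarith
    have hQeq : ∀ v ∈ Q, d v = δ := by
      have hsum_eq : ∑ v ∈ Q, (a - d v) = ∑ _v ∈ Q, (a - δ) := by
        rw [sum_const, nsmul_eq_mul, hQP, hSPval, hq, haδ2]
        ring
      have h := (sum_eq_sum_iff_of_le (fun v _ => by linarith [hdδ v] :
        ∀ v ∈ Q, a - d v ≤ a - δ)).mp hsum_eq
      intro v hv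
      have := h v hv
      linarith
    refine ⟨ha2, fun v => ?_⟩
    by_cases hv : a ≤ d v
    · exact Or.inl (hPeq v ((hmemP v).mpr hv))
    · exact Or.inr (hQeq v ((hmemQ v).mpr hv))

private lemma split_sum {V : Type*} [Fintype V] [DecidableEq V] (d : V → ℝ) (Δ δ : ℝ)
    (A : Finset V) (hA : ∀ v ∈ A, d v = Δ) (hA' : ∀ v ∉ A, d v = δ) :
    ∑ v, d v = (A.card : ℝ) * Δ + ((Aᶜ : Finset V).card : ℝ) * δ := by
  rw [← Finset.sum_add_sum_compl A]
  congr 1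
  · rw [Finset.sum_congr rfl (fun v hv => hA v hv), sum_const, nsmul_eq_mul]
  · rw [Finset.sum_congr rfl (fun v hv => hA' v (Finset.mem_compl.mp hv)), sum_const,
      nsmul_eq_mul]

private lemma card_eq {V : Type*} [Fintype V] [DecidableEq V] (d : V → ℝ) (a Δ δ : ℝ)
    (A : Finset V) (hδΔ : δ ≠ Δ)
    (hA : ∀ v ∈ A, d v = Δ) (hA' : ∀ v ∉ A, d v = δ)
    (ha2 : 2 * a = Δ + δ)
    (hsum : ∑ v, d v = (Fintype.card V : ℝ) * a) :
    2 * (A.card : ℝ) = Fintype.card V := by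
  have hsplit := split_sum d Δ δ A hA hA'
  have hcc : (A.card : ℝ) + ((Aᶜ : Finset V).card : ℝ) = Fintype.card V := by
    exact_mod_cast Finset.card_add_card_compl A
  have hfac : (2 * (A.card : ℝ) - Fintype.card V) * (Δ - δ) = 0 := by
    linear_combination (-2 : ℝ) * hsplit + 2 * hsum + (Fintype.card V : ℝ) * ha2
      - 2 * δ * hcc
  rcases mul_eq_zero.mp hfac with h | h
  · linarith
  · exact absurd (by linarith : δ = Δ) hδΔ

private lemma core2 {V : Type*} [Fintype V] [DecidableEq V] (d : V → ℝ) (a Δ δ : ℝ)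
    (A : Finset V) (hn : 0 < (Fintype.card V : ℝ)) (hδΔ : δ ≤ Δ)
    (hA : ∀ v ∈ A, d v = Δ) (hA' : ∀ v ∉ A, d v = δ)
    (hcard : 2 * (A.card : ℝ) = Fintype.card V)
    (hsum : ∑ v, d v = (Fintype.card V : ℝ) * a) :
    ∑ v, |d v - a| = (Fintype.card V : ℝ) / 2 * (Δ - δ) := by
  have hsplit := split_sum d Δ δ A hA hA'
  have hcc : (A.card : ℝ) + ((Aᶜ : Finset V).card : ℝ) = Fintype.card V := by
    exact_mod_cast Finset.card_add_card_compl A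
  have ha2 : 2 * a = Δ + δ := by
    have h0 : (Fintype.card V : ℝ) * (2 * a) = (Fintype.card V : ℝ) * (Δ + δ) := by
      linear_combination (-2 : ℝ) * hsum + 2 * hsplit + (Δ - δ) * hcard + 2 * δ * hcc
    exact mul_left_cancel₀ (ne_of_gt hn) h0
  have hptw : ∀ v, |d v - a| = (Δ - δ) / 2 := by
    intro v
    by_cases h : v ∈ A
    · rw [hA v h, abs_of_nonneg (by linarith)]
      linarith
    · rw [hA' v h, abs_of_nonpos (by linarith)]
      linarith
  rw [Finset.sum_congr rfl fun v _ => hptw v, sum_const, card_univ, nsmul_eq_mul]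
  ring

theorem stmt1 {V : Type*} [Fintype V] [DecidableEq V] (G : SimpleGraph V)
    [DecidableRel G.Adj] (hconn : G.Connected) :
    degS G ≤ (Fintype.card V : ℝ) / 2 * ((G.maxDegree : ℝ) - G.minDegree) ∧
    (degS G = (Fintype.card V : ℝ) / 2 * ((G.maxDegree : ℝ) - G.minDegree) ↔
      (∃ r, G.IsRegularOfDegree r) ∨ IsBalancedBidegreed G) := by
  classical
  have hne : Nonempty V := hconn.nonempty
  obtain ⟨vmax, hvmax⟩ := G.exists_maximal_degree_vertex
  obtain ⟨vmin, hvmin⟩ := G.exists_minimal_degree_vertex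
  have hn : 0 < (Fintype.card V : ℝ) := by exact_mod_cast Fintype.card_pos
  have hminmax : G.minDegree ≤ G.maxDegree :=
    le_of_le_of_eq (G.minDegree_le_degree vmax) hvmax.symm
  have hdΔ : ∀ v, ((G.degree v : ℝ)) ≤ (G.maxDegree : ℝ) := fun v => by
    exact_mod_cast G.degree_le_maxDegree v
  have hdδ : ∀ v, ((G.minDegree : ℝ)) ≤ (G.degree v : ℝ) := fun v => by
    exact_mod_cast G.minDegree_le_degree v
  have hsum : ∑ v, ((G.degree v : ℝ)) =
      (Fintype.card V : ℝ) * (2 * G.edgeFinset.card / Fintype.card V) := by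
    have h := G.sum_degrees_eq_twice_card_edges
    have h2 : ∑ v, ((G.degree v : ℝ)) = 2 * G.edgeFinset.card := by exact_mod_cast h
    rw [h2]
    field_simp
  have hS : degS G = ∑ v, |(G.degree v : ℝ) - 2 * G.edgeFinset.card / Fintype.card V| := rfl
  obtain ⟨hineq, hfwd⟩ := core (fun v => (G.degree v : ℝ))
    (2 * G.edgeFinset.card / Fintype.card V) (G.maxDegree : ℝ) (G.minDegree : ℝ)
    hn hdΔ hdδ hsum
  refine ⟨by rw [hS]; exact hineq, ?_, ?_⟩
  · -- equality implies regular or balanced bidegreed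
    intro heq
    rw [hS] at heq
    by_cases hcase : G.maxDegree = G.minDegree
    · exact Or.inl ⟨G.minDegree, fun v =>
        le_antisymm (hcase ▸ G.degree_le_maxDegree v) (G.minDegree_le_degree v)⟩
    · right
      have hltN : G.minDegree < G.maxDegree :=
        lt_of_le_of_ne hminmax (fun h => hcase h.symm)
      have hlt : ((G.minDegree : ℝ)) < (G.maxDegree : ℝ) := by exact_mod_cast hltN
      obtain ⟨ha2, hpart⟩ := hfwd heq hlt
      have hpartN : ∀ v, G.degree v = G.maxDegree ∨ G.degree v = G.minDegree := fun v => by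
        rcases hpart v with h | h
        · exact Or.inl (by exact_mod_cast h)
        · exact Or.inr (by exact_mod_cast h)
      set A := univ.filter (fun v : V => G.degree v = G.maxDegree) with hAdef
      have hNkA : Nk G G.maxDegree = A.card := rfl
      have hAmem : ∀ v, v ∈ A ↔ G.degree v = G.maxDegree := fun v => by simp [hAdef]
      have hA : ∀ v ∈ A, ((G.degree v : ℝ)) = (G.maxDegree : ℝ) := fun v hv => by
        exact_mod_cast (hAmem v).mp hv
      have hA' : ∀ v ∉ A, ((G.degree v : ℝ)) = (G.minDegree : ℝ) := fun v hv => by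
        rcases hpartN v with h | h
        · exact absurd ((hAmem v).mpr h) hv
        · exact_mod_cast h
      have hcardA : 2 * (A.card : ℝ) = Fintype.card V :=
        card_eq (fun v => (G.degree v : ℝ)) _ _ _ A (ne_of_lt hlt) hA hA' ha2 hsum
      have hcardAN : 2 * A.card = Fintype.card V := by exact_mod_cast hcardA
      have hBA : univ.filter (fun v : V => G.degree v = G.minDegree) = Aᶜ := by
        ext v
        rw [Finset.mem_compl, hAmem v, Finset.mem_filter]
        constructor
        · rintro ⟨-, h⟩ hc
          exact hcase (hc ▸ h ▸ rfl)
        · intro h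
          refine ⟨mem_univ v, ?_⟩
          rcases hpartN v with h2 | h2
          · exact absurd h2 h
          · exact h2
      have hcardB : 2 * Nk G G.minDegree = Fintype.card V := by
        have h1 : Nk G G.minDegree = (Aᶜ : Finset V).card := by
          unfold Nk
          rw [hBA]
        have h2 := Finset.card_add_card_compl A
        omega
      refine ⟨?_, hNkA ▸ hcardAN, hcardB⟩
      have himg : Finset.image (fun v : V => G.degree v) univ =
          {G.maxDegree, G.minDegree} := by
        apply Finset.Subset.antisymm
        · intro k hk
          simp only [Finset.mem_image, mem_univ, true_and] at hk
          obtain ⟨v, rfl⟩ := hk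
          rcases hpartN v with h | h <;> simp [h]
        · intro k hk
          simp only [Finset.mem_insert, Finset.mem_singleton] at hk
          simp only [Finset.mem_image, mem_univ, true_and]
          rcases hk with rfl | rfl
          exacts [⟨vmax, hvmax.symm⟩, ⟨vmin, hvmin.symm⟩]
      show (Finset.image (fun v : V => G.degree v) univ).card = 2
      rw [himg]
      exact Finset.card_pair hcase
  · -- regular or balanced bidegreed implies equality
    rintro (⟨r, hr⟩ | ⟨hbi, hNmax, hNmin⟩)
    · have hmax : G.maxDegree = r := by rw [hvmax, hr vmax]
      have hmin : G.minDegree = r := by rw [hvmin, hr vmin]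
      have hdr : ∀ v, ((G.degree v : ℝ)) = r := fun v => by exact_mod_cast hr v
      have ha : (2 * G.edgeFinset.card / Fintype.card V : ℝ) = r := by
        have h2 : (Fintype.card V : ℝ) * (2 * G.edgeFinset.card / Fintype.card V) =
            (Fintype.card V : ℝ) * r := by
          rw [← hsum, Finset.sum_congr rfl fun v _ => hdr v, sum_const, card_univ,
            nsmul_eq_mul]
        exact mul_left_cancel₀ (ne_of_gt hn) h2
      rw [hS, hmax, hmin]
      have hz : ∀ v : V, |(G.degree v : ℝ) - 2 * G.edgeFinset.card / Fintype.card V|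
          = 0 := fun v => by rw [hdr v, ha]; simp
      rw [Finset.sum_congr rfl fun v _ => hz v, sum_const]
      simp
    · set A := univ.filter (fun v : V => G.degree v = G.maxDegree) with hAdef
      set B := univ.filter (fun v : V => G.degree v = G.minDegree) with hBdef
      have hNkA : Nk G G.maxDegree = A.card := rfl
      have hNkB : Nk G G.minDegree = B.card := rfl
      have hcase : G.maxDegree ≠ G.minDegree := by
        intro h
        have hall : ∀ v, G.degree v = G.maxDegree := fun v =>
          le_antisymm (G.degree_le_maxDegree v) (h ▸ G.minDegree_le_degree v)
        have hAall : Nk G G.maxDegree = Fintype.card V := by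
          unfold Nk
          rw [Finset.filter_true_of_mem (fun v _ => hall v), card_univ]
        have := Fintype.card_pos (α := V)
        omega
      have hdisj : Disjoint A B := by
        rw [hAdef, hBdef]
        rw [Finset.disjoint_filter]
        intro v _ h1 h2
        exact hcase (h1 ▸ h2 ▸ rfl)
      have hABcard : A.card + B.card = Fintype.card V := by
        rw [← hNkA, ← hNkB]
        omega
      have hunion : A ∪ B = univ := by
        apply Finset.eq_univ_of_card
        rw [Finset.card_union_of_disjoint hdisj, hABcard]
      have hpartN : ∀ v, G.degree v = G.maxDegree ∨ G.degree v = G.minDegree := by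
        intro v
        have hv : v ∈ A ∪ B := hunion ▸ mem_univ v
        rcases Finset.mem_union.mp hv with h | h
        · rw [hAdef, Finset.mem_filter] at h
          exact Or.inl h.2
        · rw [hBdef, Finset.mem_filter] at h
          exact Or.inr h.2
      have hA : ∀ v ∈ A, ((G.degree v : ℝ)) = (G.maxDegree : ℝ) := fun v hv => by
        rw [hAdef, Finset.mem_filter] at hv
        exact_mod_cast hv.2
      have hA' : ∀ v ∉ A, ((G.degree v : ℝ)) = (G.minDegree : ℝ) := fun v hv => by
        rcases hpartN v with h | h
        · exact absurd (by rw [hAdef, Finset.mem_filter]; exact ⟨mem_univ v, h⟩) hv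
        · exact_mod_cast h
      have hcardA : 2 * (A.card : ℝ) = Fintype.card V := by
        rw [← hNkA] at *
        exact_mod_cast hNmax
      have hres := core2 (fun v => (G.degree v : ℝ))
        (2 * G.edgeFinset.card / Fintype.card V) (G.maxDegree : ℝ) (G.minDegree : ℝ) A hn
        (by exact_mod_cast hminmax) hA hA' hcardA hsum
      rw [hS]
      exact hres
end

section
/- Let G be a connected graph with n vertices and m edges, maximum degree Δ and minimum degree δ. Then S(G) ≥ (2·N_Δ·N_δ/n)·(Δ − δ), with equality if and only if the degree set of G has at most two elements (i.e., G is regular or bidegreed). -/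
open Finset

/-- Splitting a sum of nonnegative terms along a predicate on which the terms are constant. -/
lemma aux_sum {V : Type*} [Fintype V] (f : V → ℝ) (p : V → Prop) [DecidablePred p]
    (c : ℝ) (hf : ∀ v, 0 ≤ f v) (hp : ∀ v, p v → f v = c) :
    c * (Finset.univ.filter p).card ≤ ∑ v, f v ∧
    (c * (Finset.univ.filter p).card = ∑ v, f v ↔ ∀ v, ¬ p v → f v = 0) := by
  classical
  have hsplit : ∑ v, f v =
      ∑ v ∈ Finset.univ.filter p, f v + ∑ v ∈ Finset.univ.filter (fun v => ¬ p v), f v :=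
    (Finset.sum_filter_add_sum_filter_not _ _ _).symm
  have h1 : ∑ v ∈ Finset.univ.filter p, f v = c * (Finset.univ.filter p).card := by
    rw [Finset.sum_congr rfl (fun v hv => hp v (Finset.mem_filter.mp hv).2), Finset.sum_const,
      nsmul_eq_mul, mul_comm]
  have h2 : 0 ≤ ∑ v ∈ Finset.univ.filter (fun v => ¬ p v), f v :=
    Finset.sum_nonneg fun v _ => hf v
  constructor
  · rw [hsplit, h1]; linarith
  · rw [hsplit, h1]
    constructor
    · intro h
      have h0 : ∑ v ∈ Finset.univ.filter (fun v => ¬ p v), f v = 0 := by linarith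
      intro v hv
      exact (Finset.sum_eq_zero_iff_of_nonneg (fun w _ => hf w)).mp h0 v
        (Finset.mem_filter.mpr ⟨Finset.mem_univ v, hv⟩)
    · intro h
      have h0 : ∑ v ∈ Finset.univ.filter (fun v => ¬ p v), f v = 0 :=
        Finset.sum_eq_zero fun v hv => h v (Finset.mem_filter.mp hv).2
      rw [h0]; ring

theorem stmt3 {V : Type*} [Fintype V] [DecidableEq V] (G : SimpleGraph V)
    [DecidableRel G.Adj] (hconn : G.Connected) :
    degS G ≥ 2 * (Nk G G.maxDegree : ℝ) * (Nk G G.minDegree : ℝ) / Fintype.card V *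
      ((G.maxDegree : ℝ) - G.minDegree) ∧
    (degS G = 2 * (Nk G G.maxDegree : ℝ) * (Nk G G.minDegree : ℝ) / Fintype.card V *
      ((G.maxDegree : ℝ) - G.minDegree) ↔
      (Finset.image (fun v : V => G.degree v) Finset.univ).card ≤ 2) := by
  classical
  have hne : Nonempty V := hconn.nonempty
  obtain ⟨vmax, hvmax⟩ := G.exists_maximal_degree_vertex
  obtain ⟨vmin, hvmin⟩ := G.exists_minimal_degree_vertex
  set n := Fintype.card V with hn
  have hn0 : 0 < n := Fintype.card_pos
  have hnR : (0:ℝ) < n := by exact_mod_cast hn0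
  set Δ := G.maxDegree with hΔdef
  set δ := G.minDegree with hδdef
  have hdle : ∀ v, G.degree v ≤ Δ := fun v => G.degree_le_maxDegree v
  have hdge : ∀ v, δ ≤ G.degree v := fun v => G.minDegree_le_degree v
  set m := G.edgeFinset.card with hm
  set dbar : ℝ := 2 * m / n with hdbar
  have hS : degS G = ∑ v, |(G.degree v : ℝ) - dbar| := rfl
  have hsumd : ∑ v, (G.degree v : ℝ) = 2 * m := by
    exact_mod_cast congrArg (Nat.cast (R := ℝ)) G.sum_degrees_eq_twice_card_edges
  set A := Finset.univ.filter (fun v : V => G.degree v = Δ) with hA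
  set B := Finset.univ.filter (fun v : V => G.degree v = δ) with hB
  have hNkΔ : Nk G Δ = A.card := rfl
  have hNkδ : Nk G δ = B.card := rfl
  rw [hNkΔ, hNkδ]
  have hA0 : 0 < (A.card : ℝ) := by
    have hmem : vmax ∈ A := Finset.mem_filter.mpr ⟨Finset.mem_univ _, hvmax.symm⟩
    exact_mod_cast Finset.card_pos.mpr ⟨vmax, hmem⟩
  have hB0 : 0 < (B.card : ℝ) := by
    have hmem : vmin ∈ B := Finset.mem_filter.mpr ⟨Finset.mem_univ _, hvmin.symm⟩
    exact_mod_cast Finset.card_pos.mpr ⟨vmin, hmem⟩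
  have hdm : (n:ℝ) * dbar = 2 * m := by rw [hdbar]; field_simp
  have hdmA : (A.card:ℝ) * ((n:ℝ) * dbar) = A.card * (2 * m) := by rw [hdm]
  have hdmB : (B.card:ℝ) * ((n:ℝ) * dbar) = B.card * (2 * m) := by rw [hdm]
  -- bounds on the average degree
  have hdbar_le : dbar ≤ (Δ:ℝ) := by
    rw [hdbar, div_le_iff₀ hnR, ← hsumd]
    calc ∑ v, (G.degree v : ℝ) ≤ ∑ _v : V, (Δ:ℝ) :=
          Finset.sum_le_sum fun v _ => by exact_mod_cast hdle v
      _ = (Δ:ℝ) * n := by rw [Finset.sum_const, Finset.card_univ, ← hn, nsmul_eq_mul]; ring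
  have hdbar_ge : (δ:ℝ) ≤ dbar := by
    rw [hdbar, le_div_iff₀ hnR, ← hsumd]
    calc (δ:ℝ) * n = ∑ _v : V, (δ:ℝ) := by
          rw [Finset.sum_const, Finset.card_univ, ← hn, nsmul_eq_mul]; ring
      _ ≤ ∑ v, (G.degree v : ℝ) := Finset.sum_le_sum fun v _ => by exact_mod_cast hdge v
  -- the two key sum estimates
  have aux1 := aux_sum (fun v => (G.degree v : ℝ) - δ) (fun v => G.degree v = Δ)
      ((Δ:ℝ) - δ) (fun v => sub_nonneg.mpr (by exact_mod_cast hdge v))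
      (fun v hv => by simp [hv])
  have aux2 := aux_sum (fun v => (Δ:ℝ) - G.degree v) (fun v => G.degree v = δ)
      ((Δ:ℝ) - δ) (fun v => sub_nonneg.mpr (by exact_mod_cast hdle v))
      (fun v hv => by simp [hv])
  have hsum1 : ∑ v, ((G.degree v : ℝ) - δ) = 2 * m - n * δ := by
    rw [Finset.sum_sub_distrib, hsumd, Finset.sum_const, Finset.card_univ, ← hn, nsmul_eq_mul]
  have hsum2 : ∑ v, ((Δ:ℝ) - G.degree v) = n * Δ - 2 * m := by
    rw [Finset.sum_sub_distrib, hsumd, Finset.sum_const, Finset.card_univ, ← hn, nsmul_eq_mul]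
  have key2 : ((Δ:ℝ) - δ) * A.card ≤ 2 * m - n * δ := by
    have h := aux1.1; rwa [hsum1] at h
  have key1 : ((Δ:ℝ) - δ) * B.card ≤ n * Δ - 2 * m := by
    have h := aux2.1; rwa [hsum2] at h
  by_cases hreg : Δ = δ
  · -- regular case
    have hzero : ∀ v : V, |(G.degree v : ℝ) - dbar| = 0 := by
      intro v
      have hdv : ∀ w : V, G.degree w = δ := fun w => le_antisymm (hreg ▸ hdle w) (hdge w)
      have h2m : (2:ℝ) * m = n * δ := by
        rw [← hsumd, Finset.sum_congr rfl
          (fun w _ => by rw [hdv w] : ∀ w ∈ Finset.univ, ((G.degree w : ℝ)) = (δ:ℝ)),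
          Finset.sum_const, Finset.card_univ, ← hn, nsmul_eq_mul]
      have hd : dbar = (δ:ℝ) := by rw [hdbar, h2m]; field_simp
      simp [hdv v, hd]
    have hS0 : degS G = 0 := by rw [hS]; exact Finset.sum_eq_zero fun v _ => hzero v
    have hRHS : 2 * (A.card:ℝ) * B.card / n * ((Δ:ℝ) - δ) = 0 := by
      rw [hreg]; ring
    refine ⟨by rw [hS0, hRHS], ?_, fun _ => by rw [hS0, hRHS]⟩
    intro _
    have himg : Finset.image (fun v : V => G.degree v) Finset.univ ⊆ {δ} := by
      intro x hx
      obtain ⟨v, -, rfl⟩ := Finset.mem_image.mp hx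
      simp [le_antisymm (hreg ▸ hdle v) (hdge v)]
    calc (Finset.image (fun v : V => G.degree v) Finset.univ).card
        ≤ ({δ} : Finset ℕ).card := Finset.card_le_card himg
      _ ≤ 2 := by simp
  · -- non-regular case
    have hδΔ : (δ:ℝ) < Δ := by
      have h1 : δ ≤ Δ := le_trans (hdge vmax) (hdle vmax)
      have h2 : δ ≠ Δ := fun h => hreg h.symm
      exact_mod_cast lt_of_le_of_ne h1 h2
    have hAB : Disjoint A B := by
      rw [Finset.disjoint_left]
      intro v hvA hvB
      have h1 : G.degree v = Δ := (Finset.mem_filter.mp hvA).2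
      have h2 : G.degree v = δ := (Finset.mem_filter.mp hvB).2
      exact hreg (h1 ▸ h2)
    have hsumA : ∑ v ∈ A, |(G.degree v : ℝ) - dbar| = A.card * ((Δ:ℝ) - dbar) := by
      have h : ∀ v ∈ A, |(G.degree v : ℝ) - dbar| = (Δ:ℝ) - dbar := by
        intro v hv
        rw [(Finset.mem_filter.mp hv).2, abs_of_nonneg (sub_nonneg.mpr hdbar_le)]
      rw [Finset.sum_congr rfl h, Finset.sum_const, nsmul_eq_mul]
    have hsumB : ∑ v ∈ B, |(G.degree v : ℝ) - dbar| = B.card * (dbar - (δ:ℝ)) := by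
      have h : ∀ v ∈ B, |(G.degree v : ℝ) - dbar| = dbar - (δ:ℝ) := by
        intro v hv
        rw [(Finset.mem_filter.mp hv).2, abs_of_nonpos (sub_nonpos.mpr hdbar_ge), neg_sub]
      rw [Finset.sum_congr rfl h, Finset.sum_const, nsmul_eq_mul]
    have hS_lb : (A.card:ℝ) * ((Δ:ℝ) - dbar) + B.card * (dbar - (δ:ℝ)) ≤ degS G := by
      rw [hS, ← hsumA, ← hsumB, ← Finset.sum_union hAB]
      exact Finset.sum_le_sum_of_subset_of_nonneg (Finset.subset_univ _)
        (fun v _ _ => abs_nonneg _)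
    have hge : degS G ≥ 2 * (A.card:ℝ) * B.card / n * ((Δ:ℝ) - δ) := by
      rw [ge_iff_le, div_mul_eq_mul_div, div_le_iff₀ hnR]
      have stepK1 := mul_le_mul_of_nonneg_left key1 hA0.le
      have stepK2 := mul_le_mul_of_nonneg_left key2 hB0.le
      have stepS := mul_le_mul_of_nonneg_left hS_lb hnR.le
      linarith [stepK1, stepK2, stepS, hdmA, hdmB]
    refine ⟨hge, ?_, ?_⟩
    · -- equality implies at most two degrees
      intro heq
      have heqn : (n:ℝ) * degS G = 2 * A.card * B.card * ((Δ:ℝ) - δ) := by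
        rw [heq]; field_simp
      have hy : ((Δ:ℝ) - δ) * A.card = 2 * m - n * δ := by
        refine le_antisymm key2 ?_
        have stepK1 := mul_le_mul_of_nonneg_left key1 hA0.le
        have stepS := mul_le_mul_of_nonneg_left hS_lb hnR.le
        have step3 : (B.card:ℝ) * (2 * m - n * δ) ≤ B.card * (((Δ:ℝ) - δ) * A.card) := by
          linarith [stepK1, stepS, hdmA, hdmB, heqn]
        exact le_of_mul_le_mul_left step3 hB0
      rw [← hsum1] at hy
      have hall := aux1.2.mp hy
      have himg : Finset.image (fun v : V => G.degree v) Finset.univ ⊆ {Δ, δ} := by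
        intro x hx
        obtain ⟨v, -, rfl⟩ := Finset.mem_image.mp hx
        by_cases h : G.degree v = Δ
        · simp [h]
        · have hv0 := hall v h
          have hv1 : G.degree v = δ := by
            have h' : (G.degree v : ℝ) = (δ:ℝ) := by
              have := hv0
              linarith
            exact_mod_cast h'
          simp [hv1]
      calc (Finset.image (fun v : V => G.degree v) Finset.univ).card
          ≤ ({Δ, δ} : Finset ℕ).card := Finset.card_le_card himg
        _ ≤ 2 := (Finset.card_insert_le _ _).trans (by simp)
    · -- at most two degrees implies equality
      intro hcard
      have hΔmem : Δ ∈ Finset.image (fun v : V => G.degree v) Finset.univ :=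
        Finset.mem_image.mpr ⟨vmax, Finset.mem_univ _, hvmax.symm⟩
      have hδmem : δ ∈ Finset.image (fun v : V => G.degree v) Finset.univ :=
        Finset.mem_image.mpr ⟨vmin, Finset.mem_univ _, hvmin.symm⟩
      have hsubset : ({Δ, δ} : Finset ℕ) ⊆
          Finset.image (fun v : V => G.degree v) Finset.univ := by
        intro x hx
        rcases Finset.mem_insert.mp hx with h | h
        · exact h ▸ hΔmem
        · exact (Finset.mem_singleton.mp h) ▸ hδmem
      have hpair : ({Δ, δ} : Finset ℕ).card = 2 := by
        rw [Finset.card_insert_of_notMem (by simp [hreg]), Finset.card_singleton]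
      have himgeq : Finset.image (fun v : V => G.degree v) Finset.univ = ({Δ, δ} : Finset ℕ) :=
        (Finset.eq_of_subset_of_card_le hsubset (by rw [hpair]; exact hcard)).symm
      have hall : ∀ v : V, G.degree v = Δ ∨ G.degree v = δ := by
        intro v
        have hv : G.degree v ∈ ({Δ, δ} : Finset ℕ) := by
          rw [← himgeq]; exact Finset.mem_image.mpr ⟨v, Finset.mem_univ _, rfl⟩
        simpa using hv
      have hU : A ∪ B = Finset.univ := by
        ext v
        simp only [Finset.mem_union, hA, hB, Finset.mem_filter, Finset.mem_univ, true_and,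
          iff_true]
        exact hall v
      have hn2 : (n:ℝ) = A.card + B.card := by
        have h := Finset.card_union_of_disjoint hAB
        rw [hU, Finset.card_univ, ← hn] at h
        exact_mod_cast h
      have hm2 : 2 * (m:ℝ) = A.card * Δ + B.card * δ := by
        rw [← hsumd, ← hU, Finset.sum_union hAB]
        congr 1
        · have h : ∀ v ∈ A, ((G.degree v : ℝ)) = (Δ:ℝ) := by
            intro v hv; exact_mod_cast (Finset.mem_filter.mp hv).2
          rw [Finset.sum_congr rfl h, Finset.sum_const, nsmul_eq_mul]
        · have h : ∀ v ∈ B, ((G.degree v : ℝ)) = (δ:ℝ) := by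
            intro v hv; exact_mod_cast (Finset.mem_filter.mp hv).2
          rw [Finset.sum_congr rfl h, Finset.sum_const, nsmul_eq_mul]
      have hSval : degS G = A.card * ((Δ:ℝ) - dbar) + B.card * (dbar - (δ:ℝ)) := by
        rw [hS, ← hsumA, ← hsumB, ← Finset.sum_union hAB, hU]
      have e1 : (n:ℝ) * ((Δ:ℝ) - dbar) = B.card * ((Δ:ℝ) - δ) := by
        linear_combination (Δ:ℝ) * hn2 - hdm - hm2
      have e2 : (n:ℝ) * (dbar - (δ:ℝ)) = A.card * ((Δ:ℝ) - δ) := by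
        linear_combination hdm + hm2 - (δ:ℝ) * hn2
      rw [hSval, div_mul_eq_mul_div, eq_div_iff hnR.ne']
      linear_combination (A.card:ℝ) * e1 + (B.card:ℝ) * e2
end

section
/- Let G be a connected graph with n vertices and m edges, maximum degree Δ and minimum degree δ. Then Var(G) ≥ (N_δ·N_Δ·(N_δ + N_Δ)/n³)·(Δ − δ)², with equality if and only if the degree set of G has at most two elements (i.e., G is regular or bidegreed). -/
open Finset

private theorem key1 (a b n x y μ : ℝ) (ha : 1 ≤ a) (hb : 1 ≤ b) (hab : a + b ≤ n) :
    a*b*(a+b)*(y-x)^2 ≤ n^2 * (a*(x-μ)^2 + b*(y-μ)^2) := by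
  set S := a*(x-μ)^2 + b*(y-μ)^2 with hSdef
  have hS : 0 ≤ S := by positivity
  have h1 : (a+b)*S = a*b*(y-x)^2 + (a*(x-μ)+b*(y-μ))^2 := by rw [hSdef]; ring
  have h2 : (a+b)^2*S ≤ n^2*S := by
    nlinarith [mul_nonneg (mul_nonneg (by linarith : (0:ℝ) ≤ n-(a+b)) (by linarith : (0:ℝ) ≤ n+(a+b))) hS]
  have h3 : (a+b)^2*S = (a+b)*(a*b*(y-x)^2) + (a+b)*(a*(x-μ)+b*(y-μ))^2 := by
    linear_combination (a+b)*h1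
  have h4 : 0 ≤ (a+b)*(a*(x-μ)+b*(y-μ))^2 := mul_nonneg (by linarith) (sq_nonneg _)
  linarith

private theorem key1' (a b n x y μ T : ℝ) (ha : 1 ≤ a) (hb : 1 ≤ b) (hab : a + b ≤ n)
    (hT : a*(x-μ)^2 + b*(y-μ)^2 ≤ T) :
    a*b*(a+b)/n^3*(y-x)^2 ≤ 1/n*T := by
  have hn : (0:ℝ) < n := by linarith
  have h := key1 a b n x y μ ha hb hab
  have h2 : a*b*(a+b)*(y-x)^2 ≤ n^2*T := le_trans h (by nlinarith)
  rw [div_mul_eq_mul_div, one_div, inv_mul_eq_div, div_le_div_iff₀ (by positivity) hn]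
  nlinarith [mul_le_mul_of_nonneg_left h2 hn.le]

private theorem key2 (a b n x y μ : ℝ) (ha : 1 ≤ a) (hb : 1 ≤ b) (hab : a + b + 1 ≤ n) (hxy : x < y) :
    a*b*(a+b)*(y-x)^2 < n^2 * (a*(x-μ)^2 + b*(y-μ)^2) := by
  set S := a*(x-μ)^2 + b*(y-μ)^2 with hSdef
  have h1 : (a+b)*S = a*b*(y-x)^2 + (a*(x-μ)+b*(y-μ))^2 := by rw [hSdef]; ring
  have hyx : (0:ℝ) < (y-x)^2 := pow_pos (by linarith) 2
  have hpos : 0 < a*b*(y-x)^2 := mul_pos (mul_pos (by linarith) (by linarith)) hyx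
  have hSpos : 0 < S := by nlinarith [sq_nonneg (a*(x-μ)+b*(y-μ))]
  have h2 : (a+b)^2*S < n^2*S := by
    nlinarith [mul_pos (mul_pos (by linarith : (0:ℝ) < n-(a+b)) (by linarith : (0:ℝ) < n+(a+b))) hSpos]
  have h3 : (a+b)^2*S = (a+b)*(a*b*(y-x)^2) + (a+b)*(a*(x-μ)+b*(y-μ))^2 := by
    linear_combination (a+b)*h1
  have h4 : 0 ≤ (a+b)*(a*(x-μ)+b*(y-μ))^2 := mul_nonneg (by linarith) (sq_nonneg _)
  linarith

private theorem key2' (a b n x y μ T : ℝ) (ha : 1 ≤ a) (hb : 1 ≤ b) (hab : a + b + 1 ≤ n)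
    (hxy : x < y) (hT : a*(x-μ)^2 + b*(y-μ)^2 ≤ T) :
    a*b*(a+b)/n^3*(y-x)^2 < 1/n*T := by
  have hn : (0:ℝ) < n := by linarith
  have h := key2 a b n x y μ ha hb hab hxy
  have h2 : a*b*(a+b)*(y-x)^2 < n^2*T := lt_of_lt_of_le h (by nlinarith)
  rw [div_mul_eq_mul_div, one_div, inv_mul_eq_div, div_lt_div_iff₀ (by positivity) hn]
  nlinarith [mul_lt_mul_of_pos_left h2 hn]

private theorem key3' (a b n x y μ : ℝ) (hn : (0:ℝ) < n) (hab : a + b = n)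
    (hμ : a*x + b*y = n*μ) :
    1/n * (a*(x-μ)^2 + b*(y-μ)^2) = a*b*(a+b)/n^3*(y-x)^2 := by
  have hT : a*(x-μ)+b*(y-μ) = 0 := by linear_combination hμ - μ*hab
  have h1 : (a+b)*(a*(x-μ)^2 + b*(y-μ)^2) = a*b*(y-x)^2 + (a*(x-μ)+b*(y-μ))^2 := by ring
  have hkey : n^2 * (a*(x-μ)^2 + b*(y-μ)^2) = a*b*(a+b)*(y-x)^2 := by
    subst hab
    linear_combination (a+b)*h1 + (a+b)*(a*(x-μ)+b*(y-μ))*hT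
  field_simp
  linear_combination hkey


theorem stmt4 {V : Type*} [Fintype V] [DecidableEq V] (G : SimpleGraph V)
    [DecidableRel G.Adj] (hconn : G.Connected) :
    degVar G ≥ (Nk G G.minDegree : ℝ) * (Nk G G.maxDegree : ℝ) *
      ((Nk G G.minDegree : ℝ) + (Nk G G.maxDegree : ℝ)) / (Fintype.card V : ℝ) ^ 3 *
      ((G.maxDegree : ℝ) - G.minDegree) ^ 2 ∧
    (degVar G = (Nk G G.minDegree : ℝ) * (Nk G G.maxDegree : ℝ) *
      ((Nk G G.minDegree : ℝ) + (Nk G G.maxDegree : ℝ)) / (Fintype.card V : ℝ) ^ 3 *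
      ((G.maxDegree : ℝ) - G.minDegree) ^ 2 ↔
      (Finset.image (fun v : V => G.degree v) Finset.univ).card ≤ 2) := by
  classical
  haveI hne : Nonempty V := hconn.nonempty
  have hn0 : 0 < Fintype.card V := Fintype.card_pos
  have hnR : (0:ℝ) < (Fintype.card V : ℝ) := by exact_mod_cast hn0
  obtain ⟨vmin, hvmin⟩ := G.exists_minimal_degree_vertex
  obtain ⟨vmax, hvmax⟩ := G.exists_maximal_degree_vertex
  set δ := G.minDegree with hδdef
  set Δ := G.maxDegree with hΔdef
  set μ : ℝ := 2 * G.edgeFinset.card / Fintype.card V with hμdef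
  have hδΔ : δ ≤ Δ := by rw [hvmin]; exact G.degree_le_maxDegree vmin
  have hvar : degVar G = 1/(Fintype.card V : ℝ) * ∑ v : V, ((G.degree v : ℝ) - μ)^2 := rfl
  have hsumd : ∑ v : V, (G.degree v : ℝ) = Fintype.card V * μ := by
    have h : ∑ v : V, (G.degree v : ℝ) = 2 * G.edgeFinset.card := by
      exact_mod_cast G.sum_degrees_eq_twice_card_edges
    rw [h, hμdef]
    field_simp
  by_cases hreg : δ = Δ
  · -- regular case
    have hall : ∀ v, G.degree v = δ := fun v =>
      le_antisymm (by rw [hreg]; exact G.degree_le_maxDegree v) (G.minDegree_le_degree v)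
    have hμδ : μ = (δ:ℝ) := by
      have h1 : (Fintype.card V:ℝ) * μ = (Fintype.card V:ℝ) * δ := by
        rw [← hsumd]
        simp [hall, Finset.sum_const, Finset.card_univ, nsmul_eq_mul]
      exact mul_left_cancel₀ hnR.ne' h1
    have hvar0 : degVar G = 0 := by
      rw [hvar]
      simp [hall, hμδ]
    have hz : ((Δ:ℝ) - (δ:ℝ))^2 = 0 := by rw [hreg]; ring
    have himg2 : (Finset.image (fun v : V => G.degree v) Finset.univ).card ≤ 2 := by
      have hsub : Finset.image (fun v : V => G.degree v) Finset.univ ⊆ {δ} := by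
        intro x hx
        obtain ⟨v, -, rfl⟩ := Finset.mem_image.mp hx
        simp [hall v]
      exact le_trans (Finset.card_le_card hsub) (by simp)
    refine ⟨by rw [hz, mul_zero, hvar0], fun _ => himg2, fun _ => by rw [hz, mul_zero, hvar0]⟩
  · -- non-regular case
    have hlt : δ < Δ := lt_of_le_of_ne hδΔ hreg
    have hltR : ((δ:ℕ):ℝ) < ((Δ:ℕ):ℝ) := by exact_mod_cast hlt
    set A := Finset.univ.filter (fun v : V => G.degree v = δ) with hAdef
    set B := Finset.univ.filter (fun v : V => G.degree v = Δ) with hBdef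
    have hNA : Nk G δ = A.card := rfl
    have hNB : Nk G Δ = B.card := rfl
    have hdisj : Disjoint A B := by
      rw [Finset.disjoint_left]
      intro v hvA hvB
      exact hreg ((Finset.mem_filter.mp hvA).2 ▸ (Finset.mem_filter.mp hvB).2)
    have hvminA : vmin ∈ A := Finset.mem_filter.mpr ⟨Finset.mem_univ _, hvmin.symm⟩
    have hvmaxB : vmax ∈ B := Finset.mem_filter.mpr ⟨Finset.mem_univ _, hvmax.symm⟩
    have ha1 : 1 ≤ A.card := Finset.card_pos.mpr ⟨vmin, hvminA⟩
    have hb1 : 1 ≤ B.card := Finset.card_pos.mpr ⟨vmax, hvmaxB⟩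
    have ha1R : (1:ℝ) ≤ (A.card:ℝ) := by exact_mod_cast ha1
    have hb1R : (1:ℝ) ≤ (B.card:ℝ) := by exact_mod_cast hb1
    have hun : A.card + B.card ≤ Fintype.card V := by
      rw [← Finset.card_union_of_disjoint hdisj]
      exact Finset.card_le_univ _
    have hunR : (A.card:ℝ) + (B.card:ℝ) ≤ (Fintype.card V:ℝ) := by exact_mod_cast hun
    have hsumA : ∑ v ∈ A, ((G.degree v:ℝ) - μ)^2 = (A.card:ℝ) * ((δ:ℝ) - μ)^2 := by
      rw [Finset.sum_congr rfl (fun v hv => by rw [(Finset.mem_filter.mp hv).2]),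
        Finset.sum_const, nsmul_eq_mul]
    have hsumB : ∑ v ∈ B, ((G.degree v:ℝ) - μ)^2 = (B.card:ℝ) * ((Δ:ℝ) - μ)^2 := by
      rw [Finset.sum_congr rfl (fun v hv => by rw [(Finset.mem_filter.mp hv).2]),
        Finset.sum_const, nsmul_eq_mul]
    have hdegA : ∑ v ∈ A, (G.degree v:ℝ) = (A.card:ℝ) * (δ:ℝ) := by
      rw [Finset.sum_congr rfl (fun v hv => by rw [(Finset.mem_filter.mp hv).2]),
        Finset.sum_const, nsmul_eq_mul]
    have hdegB : ∑ v ∈ B, (G.degree v:ℝ) = (B.card:ℝ) * (Δ:ℝ) := by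
      rw [Finset.sum_congr rfl (fun v hv => by rw [(Finset.mem_filter.mp hv).2]),
        Finset.sum_const, nsmul_eq_mul]
    have hlow : (A.card:ℝ) * ((δ:ℝ)-μ)^2 + (B.card:ℝ) * ((Δ:ℝ)-μ)^2 ≤
        ∑ v : V, ((G.degree v:ℝ)-μ)^2 := by
      rw [← hsumA, ← hsumB, ← Finset.sum_union hdisj]
      exact Finset.sum_le_sum_of_subset_of_nonneg (Finset.subset_univ _) (fun v _ _ => sq_nonneg _)
    rw [hNA, hNB]
    constructor
    · rw [ge_iff_le, hvar]
      exact key1' _ _ _ _ _ _ _ ha1R hb1R hunR hlow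
    constructor
    · -- equality implies at most two degrees
      intro heq
      by_cases hc : A.card + B.card = Fintype.card V
      · have hcov : A ∪ B = Finset.univ :=
          Finset.eq_univ_of_card _ (by rw [Finset.card_union_of_disjoint hdisj, hc])
        have himgsub : Finset.image (fun v : V => G.degree v) Finset.univ ⊆ {δ, Δ} := by
          intro x hx
          obtain ⟨v, -, rfl⟩ := Finset.mem_image.mp hx
          have hv : v ∈ A ∪ B := hcov ▸ Finset.mem_univ v
          rcases Finset.mem_union.mp hv with h | h
          · simp [(Finset.mem_filter.mp h).2]
          · simp [(Finset.mem_filter.mp h).2]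
        exact le_trans (Finset.card_le_card himgsub) ((Finset.card_insert_le _ _).trans (by simp))
      · have hc' : A.card + B.card + 1 ≤ Fintype.card V := by omega
        have hc'R : (A.card:ℝ) + (B.card:ℝ) + 1 ≤ (Fintype.card V:ℝ) := by exact_mod_cast hc'
        have hstrict := key2' (A.card:ℝ) (B.card:ℝ) (Fintype.card V:ℝ) (δ:ℝ) (Δ:ℝ) μ
          (∑ v : V, ((G.degree v:ℝ)-μ)^2) ha1R hb1R hc'R hltR hlow
        rw [← hvar] at hstrict
        exact absurd heq (ne_of_gt hstrict)
    · -- at most two degrees implies equality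
      intro himg
      have hδmem : δ ∈ Finset.image (fun v : V => G.degree v) Finset.univ :=
        Finset.mem_image.mpr ⟨vmin, Finset.mem_univ _, hvmin.symm⟩
      have hΔmem : Δ ∈ Finset.image (fun v : V => G.degree v) Finset.univ :=
        Finset.mem_image.mpr ⟨vmax, Finset.mem_univ _, hvmax.symm⟩
      have hsub : ({δ, Δ} : Finset ℕ) ⊆ Finset.image (fun v : V => G.degree v) Finset.univ :=
        Finset.insert_subset hδmem (Finset.singleton_subset_iff.mpr hΔmem)
      have hcard2 : ({δ, Δ} : Finset ℕ).card = 2 := by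
        rw [Finset.card_insert_of_notMem (by simpa using hreg), Finset.card_singleton]
      have heqs : ({δ, Δ} : Finset ℕ) = Finset.image (fun v : V => G.degree v) Finset.univ :=
        Finset.eq_of_subset_of_card_le hsub (by rw [hcard2]; exact himg)
      have hcov : A ∪ B = Finset.univ := by
        apply Finset.eq_univ_of_forall
        intro v
        have hv : G.degree v ∈ ({δ, Δ} : Finset ℕ) :=
          heqs ▸ Finset.mem_image.mpr ⟨v, Finset.mem_univ v, rfl⟩
        rcases Finset.mem_insert.mp hv with h | h
        · exact Finset.mem_union_left _ (Finset.mem_filter.mpr ⟨Finset.mem_univ v, h⟩)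
        · exact Finset.mem_union_right _
            (Finset.mem_filter.mpr ⟨Finset.mem_univ v, Finset.mem_singleton.mp h⟩)
      have hcardn : (A.card:ℝ) + (B.card:ℝ) = (Fintype.card V:ℝ) := by
        have : A.card + B.card = Fintype.card V := by
          rw [← Finset.card_union_of_disjoint hdisj, hcov, Finset.card_univ]
        exact_mod_cast this
      have hμeq : (A.card:ℝ)*(δ:ℝ) + (B.card:ℝ)*(Δ:ℝ) = (Fintype.card V:ℝ) * μ := by
        rw [← hsumd, ← hdegA, ← hdegB, ← Finset.sum_union hdisj, hcov]
      have hSig : ∑ v : V, ((G.degree v:ℝ)-μ)^2 =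
          (A.card:ℝ)*((δ:ℝ)-μ)^2 + (B.card:ℝ)*((Δ:ℝ)-μ)^2 := by
        rw [← hsumA, ← hsumB, ← Finset.sum_union hdisj, hcov]
      rw [hvar, hSig]
      exact key3' _ _ _ _ _ _ hnR hcardn hμeq
end

section
/- Let G be a connected bidegreed graph with n vertices, maximum degree Δ and minimum degree δ. Then S(G) = IRD(G) = (2·N_Δ·N_δ/n)·(Δ − δ) ≤ (n/2)·(Δ − δ) = IRR(G), and equality S(G) = IRR(G) holds if and only if G is a balanced bidegreed graph (n even and N_Δ = N_δ = n/2). -/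
open Finset

set_option maxHeartbeats 1600000 in
theorem stmt6 {V : Type*} [Fintype V] [DecidableEq V] (G : SimpleGraph V)
    [DecidableRel G.Adj] (hconn : G.Connected) (hbi : IsBidegreed G) :
    degS G = 2 * (Nk G G.maxDegree : ℝ) * (Nk G G.minDegree : ℝ) /
      ((Nk G G.maxDegree : ℝ) + (Nk G G.minDegree : ℝ)) * ((G.maxDegree : ℝ) - G.minDegree) ∧
    degS G = 2 * (Nk G G.maxDegree : ℝ) * (Nk G G.minDegree : ℝ) / (Fintype.card V : ℝ) *
      ((G.maxDegree : ℝ) - G.minDegree) ∧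
    degS G ≤ (Fintype.card V : ℝ) / 2 * ((G.maxDegree : ℝ) - G.minDegree) ∧
    (degS G = (Fintype.card V : ℝ) / 2 * ((G.maxDegree : ℝ) - G.minDegree) ↔
      Even (Fintype.card V) ∧ 2 * Nk G G.maxDegree = Fintype.card V ∧
        2 * Nk G G.minDegree = Fintype.card V) := by
  have himg : (Finset.image (fun v : V => G.degree v) Finset.univ).card = 2 := hbi
  have hV : Nonempty V := by
    rcases Finset.card_pos.mp (by rw [himg]; norm_num) with ⟨k, hk⟩
    rcases Finset.mem_image.mp hk with ⟨v, _, _⟩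
    exact ⟨v⟩
  obtain ⟨vmax, hvmax⟩ := G.exists_maximal_degree_vertex
  obtain ⟨vmin, hvmin⟩ := G.exists_minimal_degree_vertex
  have hΔδne : G.minDegree ≠ G.maxDegree := by
    intro h
    have hall : ∀ v : V, G.degree v = G.maxDegree := fun v =>
      le_antisymm (G.degree_le_maxDegree v) (h ▸ G.minDegree_le_degree v)
    have hsub1 : (Finset.image (fun v : V => G.degree v) Finset.univ)
        ⊆ {G.maxDegree} := by
      intro k hk
      rcases Finset.mem_image.mp hk with ⟨v, _, rfl⟩
      simp [hall v]
    have := Finset.card_le_card hsub1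
    rw [himg] at this
    simp at this
  have hlt : G.minDegree < G.maxDegree :=
    lt_of_le_of_ne (hvmax ▸ G.minDegree_le_degree vmax) hΔδne
  have hsub : ({G.maxDegree, G.minDegree} : Finset ℕ)
      ⊆ Finset.image (fun v : V => G.degree v) Finset.univ := by
    intro k hk
    simp only [Finset.mem_insert, Finset.mem_singleton] at hk
    rcases hk with h | h
    · exact Finset.mem_image.mpr ⟨vmax, Finset.mem_univ _, by rw [← hvmax, h]⟩
    · exact Finset.mem_image.mpr ⟨vmin, Finset.mem_univ _, by rw [← hvmin, h]⟩
  have hpair : ({G.maxDegree, G.minDegree} : Finset ℕ).card = 2 := by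
    rw [Finset.card_insert_of_notMem (by simpa using hΔδne.symm)]
    simp
  have himg_eq : Finset.image (fun v : V => G.degree v) Finset.univ
      = {G.maxDegree, G.minDegree} := by
    refine (Finset.eq_of_subset_of_card_le hsub ?_).symm
    rw [himg, hpair]
  have hmem : ∀ v : V, G.degree v = G.maxDegree ∨ G.degree v = G.minDegree := by
    intro v
    have : G.degree v ∈ ({G.maxDegree, G.minDegree} : Finset ℕ) := by
      rw [← himg_eq]; exact Finset.mem_image_of_mem _ (Finset.mem_univ v)
    simpa using this
  set a := Nk G G.maxDegree with ha_def
  set b := Nk G G.minDegree with hb_def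
  have hb_eq : b = (Finset.filter (fun v : V => ¬ G.degree v = G.maxDegree)
      Finset.univ).card := by
    rw [hb_def, Nk]
    congr 1
    apply Finset.filter_congr
    intro v _
    constructor
    · intro h h'; exact hΔδne (h ▸ h')
    · intro h; rcases hmem v with h' | h'
      · exact absurd h' h
      · exact h'
  have hcard : a + b = Fintype.card V := by
    rw [ha_def, Nk, hb_eq]
    exact Finset.card_filter_add_card_filter_not _
  have hsumdeg : ∑ v : V, G.degree v = a * G.maxDegree + b * G.minDegree := by
    rw [← Finset.sum_filter_add_sum_filter_not Finset.univ
      (fun v => G.degree v = G.maxDegree)]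
    congr 1
    · rw [Finset.sum_congr rfl (fun v hv => (Finset.mem_filter.mp hv).2),
        Finset.sum_const, smul_eq_mul, ha_def, Nk]
    · rw [Finset.sum_congr rfl (fun v hv => ?_), Finset.sum_const, smul_eq_mul, hb_eq]
      rcases hmem v with h | h
      · exact absurd h (Finset.mem_filter.mp hv).2
      · exact h
  have ha1 : 1 ≤ a := by
    rw [ha_def, Nk]
    exact Finset.card_pos.mpr ⟨vmax, Finset.mem_filter.mpr ⟨Finset.mem_univ _, hvmax.symm⟩⟩
  have hb1 : 1 ≤ b := by
    rw [hb_def, Nk]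
    exact Finset.card_pos.mpr ⟨vmin, Finset.mem_filter.mpr ⟨Finset.mem_univ _, hvmin.symm⟩⟩
  set A : ℝ := (a : ℝ) with hA_def
  set B : ℝ := (b : ℝ) with hB_def
  set D : ℝ := (G.maxDegree : ℝ) with hD_def
  set d : ℝ := (G.minDegree : ℝ) with hd_def
  have hA1 : (1 : ℝ) ≤ A := by rw [hA_def]; exact_mod_cast ha1
  have hB1 : (1 : ℝ) ≤ B := by rw [hB_def]; exact_mod_cast hb1
  have hdD : d < D := by rw [hd_def, hD_def]; exact_mod_cast hlt
  have hn : (Fintype.card V : ℝ) = A + B := by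
    rw [hA_def, hB_def]; exact_mod_cast hcard.symm
  have hnpos : (0 : ℝ) < Fintype.card V := by rw [hn]; linarith
  have hnne : (Fintype.card V : ℝ) ≠ 0 := hnpos.ne'
  have hABpos : (0 : ℝ) < A + B := by linarith
  have hABne : A + B ≠ 0 := hABpos.ne'
  have hkey : a * G.maxDegree + b * G.minDegree = 2 * G.edgeFinset.card := by
    rw [← hsumdeg]; exact G.sum_degrees_eq_twice_card_edges
  have h2m : 2 * (G.edgeFinset.card : ℝ) = A * D + B * d := by
    rw [hA_def, hB_def, hD_def, hd_def]
    exact_mod_cast hkey.symm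
  set t : ℝ := 2 * (G.edgeFinset.card : ℝ) / Fintype.card V with ht_def
  have ht : t = (A * D + B * d) / (A + B) := by rw [ht_def, h2m, hn]
  have htD : t ≤ D := by
    rw [ht, div_le_iff₀ hABpos]
    nlinarith
  have hdt : d ≤ t := by
    rw [ht, le_div_iff₀ hABpos]
    nlinarith
  have hS : degS G = A * (D - t) + B * (t - d) := by
    have h1 : ∀ v ∈ Finset.filter (fun v : V => G.degree v = G.maxDegree) Finset.univ,
        |(G.degree v : ℝ) - 2 * G.edgeFinset.card / Fintype.card V| = D - t := by
      intro v hv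
      rw [(Finset.mem_filter.mp hv).2, ← ht_def, ← hD_def, abs_of_nonneg (by linarith)]
    have h2 : ∀ v ∈ Finset.filter (fun v : V => ¬ G.degree v = G.maxDegree) Finset.univ,
        |(G.degree v : ℝ) - 2 * G.edgeFinset.card / Fintype.card V| = t - d := by
      intro v hv
      have hvd : G.degree v = G.minDegree := by
        rcases hmem v with h | h
        · exact absurd h (Finset.mem_filter.mp hv).2
        · exact h
      rw [hvd, ← ht_def, ← hd_def, abs_of_nonpos (by linarith), neg_sub]
    rw [degS, ← Finset.sum_filter_add_sum_filter_not Finset.univ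
      (fun v => G.degree v = G.maxDegree), Finset.sum_congr rfl h1,
      Finset.sum_congr rfl h2, Finset.sum_const, Finset.sum_const,
      nsmul_eq_mul, nsmul_eq_mul,
      show (Finset.filter (fun v : V => G.degree v = G.maxDegree)
        Finset.univ).card = a from rfl, ← hb_eq, hA_def, hB_def]
  have goal1 : degS G = 2 * A * B / (A + B) * (D - d) := by
    rw [hS, ht]
    field_simp
    ring
  have goal2 : degS G = 2 * A * B / (Fintype.card V : ℝ) * (D - d) := by
    rw [goal1, hn]
  refine ⟨goal1, goal2, ?_, ?_⟩
  · rw [goal2, hn, div_mul_eq_mul_div, div_le_iff₀ hABpos]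
    nlinarith [mul_nonneg (sq_nonneg (A - B)) (sub_nonneg.mpr hdD.le)]
  · constructor
    · intro heq
      rw [goal2] at heq
      have hDd : D - d ≠ 0 := by linarith
      have h1 : 2 * A * B / (Fintype.card V : ℝ) = (Fintype.card V : ℝ) / 2 :=
        mul_right_cancel₀ hDd heq
      rw [hn] at h1
      rw [div_eq_div_iff hABne two_ne_zero] at h1
      have hsq : (A - B) ^ 2 = 0 := by
        have hr : (A - B) ^ 2 = (A + B) * (A + B) - 2 * A * B * 2 := by ring
        rw [hr, ← h1, sub_self]
      have hAB : A = B := by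
        have h0 : A - B = 0 := by
          by_contra h0
          exact absurd hsq (pow_ne_zero 2 h0)
        linarith
      have h2a : 2 * a = Fintype.card V := by
        have h' : 2 * A = (Fintype.card V : ℝ) := by rw [hn, ← hAB]; ring
        rw [hA_def] at h'
        exact_mod_cast h'
      have h2b : 2 * b = Fintype.card V := by
        have h' : 2 * B = (Fintype.card V : ℝ) := by rw [hn, hAB]; ring
        rw [hB_def] at h'
        exact_mod_cast h'
      exact ⟨⟨a, by omega⟩, h2a, h2b⟩
    · rintro ⟨-, h2a, h2b⟩
      rw [goal2]
      have hA2 : 2 * A = (Fintype.card V : ℝ) := by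
        rw [hA_def]; exact_mod_cast h2a
      have hB2 : 2 * B = (Fintype.card V : ℝ) := by
        rw [hB_def]; exact_mod_cast h2b
      have hkey2 : 2 * A * B / (Fintype.card V : ℝ) = (Fintype.card V : ℝ) / 2 := by
        rw [div_eq_div_iff hnne two_ne_zero]
        linear_combination 2 * B * hA2 + (Fintype.card V : ℝ) * hB2
      rw [hkey2]
end

section
/- Let G be a connected irregular graph with n vertices. Then Var(G)/S(G) ≤ (Δ − δ)/(2n) ≤ (n − 2)/(2n) < 1/2; in particular Var(G) < S(G)/2. -/
open Finset

theorem stmt9 {V : Type*} [Fintype V] [DecidableEq V] (G : SimpleGraph V)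
    [DecidableRel G.Adj] (hconn : G.Connected)
    (hirr : ∃ u v : V, G.degree u ≠ G.degree v) :
    degVar G / degS G ≤ ((G.maxDegree : ℝ) - G.minDegree) / (2 * Fintype.card V) ∧
    ((G.maxDegree : ℝ) - G.minDegree) / (2 * Fintype.card V) ≤
      ((Fintype.card V : ℝ) - 2) / (2 * Fintype.card V) ∧
    ((Fintype.card V : ℝ) - 2) / (2 * Fintype.card V) < 1 / 2 ∧
    degVar G < degS G / 2 := by
  classical
  obtain ⟨u, v, huv⟩ := hirr
  haveI : Nontrivial V := ⟨u, v, fun h => huv (by rw [h])⟩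
  have hn2 : 2 ≤ Fintype.card V := Fintype.one_lt_card
  have hn0 : (0:ℝ) < (Fintype.card V : ℝ) := by
    exact_mod_cast Nat.lt_of_lt_of_le Nat.zero_lt_two hn2
  set n : ℝ := (Fintype.card V : ℝ) with hn
  set a : ℝ := 2 * G.edgeFinset.card / n with ha
  set D : ℝ := (G.maxDegree : ℝ) with hD
  set E : ℝ := (G.minDegree : ℝ) with hE
  -- min degree ≥ 1
  have hdelta1 : (1:ℝ) ≤ E := by
    obtain ⟨w, hw⟩ := G.exists_minimal_degree_vertex
    obtain ⟨w', hww'⟩ := exists_ne w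
    obtain ⟨p⟩ := hconn w w'
    have h1 : 1 ≤ G.minDegree := by
      rw [hw]
      cases p with
      | nil => exact absurd rfl hww'.symm
      | cons h _ =>
        have : 0 < G.degree w := (G.degree_pos_iff_exists_adj w).mpr ⟨_, h⟩
        omega
    rw [hE]; exact_mod_cast h1
  have hDelta : D ≤ n - 1 := by
    have h1 : G.maxDegree < Fintype.card V := G.maxDegree_lt_card_verts
    have h2 : (G.maxDegree : ℝ) + 1 ≤ (Fintype.card V : ℝ) := by exact_mod_cast h1
    rw [hD, hn]; linarith
  -- sum of degrees
  have hsumd : ∑ w : V, (G.degree w : ℝ) = 2 * G.edgeFinset.card := by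
    norm_cast
    exact G.sum_degrees_eq_twice_card_edges
  have hna : n * a = 2 * G.edgeFinset.card := by
    rw [ha]; field_simp
  have hzero : ∑ w : V, ((G.degree w : ℝ) - a) = 0 := by
    rw [Finset.sum_sub_distrib, hsumd, Finset.sum_const, Finset.card_univ,
      nsmul_eq_mul, ← hn, hna, sub_self]
  -- bounds on individual degrees
  have hdb : ∀ w : V, E ≤ (G.degree w : ℝ) ∧ (G.degree w : ℝ) ≤ D := fun w =>
    ⟨by rw [hE]; exact_mod_cast G.minDegree_le_degree w,
     by rw [hD]; exact_mod_cast G.degree_le_maxDegree w⟩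
  -- average between min and max
  have haE : E ≤ a := by
    have h1 : n * E ≤ ∑ w : V, (G.degree w : ℝ) := by
      calc n * E = ∑ _w : V, E := by
            rw [Finset.sum_const, Finset.card_univ, nsmul_eq_mul, hn]
        _ ≤ _ := Finset.sum_le_sum fun w _ => (hdb w).1
    nlinarith [hna]
  have haD : a ≤ D := by
    have h1 : ∑ w : V, (G.degree w : ℝ) ≤ n * D := by
      calc ∑ w : V, (G.degree w : ℝ) ≤ ∑ _w : V, D :=
            Finset.sum_le_sum fun w _ => (hdb w).2
        _ = n * D := by rw [Finset.sum_const, Finset.card_univ, nsmul_eq_mul, hn]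
    nlinarith [hna]
  -- positive/negative parts
  set P : ℝ := ∑ w : V, max ((G.degree w : ℝ) - a) 0 with hP
  set N : ℝ := ∑ w : V, max (-((G.degree w : ℝ) - a)) 0 with hN
  have hPNS : P + N = degS G := by
    rw [hP, hN, ← Finset.sum_add_distrib, degS]
    exact Finset.sum_congr rfl fun w _ => by
      rw [max_zero_add_max_neg_zero_eq_abs_self]
  have hPNz : P - N = 0 := by
    rw [hP, hN, ← Finset.sum_sub_distrib]
    calc ∑ w : V, (max ((G.degree w : ℝ) - a) 0 - max (-((G.degree w : ℝ) - a)) 0)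
        = ∑ w : V, ((G.degree w : ℝ) - a) :=
          Finset.sum_congr rfl fun w _ => max_zero_sub_max_neg_zero_eq_self _
      _ = 0 := hzero
  -- S > 0
  have hSpos : 0 < degS G := by
    have hne : (G.degree u : ℝ) - a ≠ 0 ∨ (G.degree v : ℝ) - a ≠ 0 := by
      by_contra h
      push_neg at h
      exact huv (by
        have : (G.degree u : ℝ) = (G.degree v : ℝ) := by
          have := h.1; have := h.2; linarith
        exact_mod_cast this)
    rw [degS]
    rcases hne with h | h
    · exact Finset.sum_pos' (fun w _ => abs_nonneg _)
        ⟨u, Finset.mem_univ u, abs_pos.mpr h⟩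
    · exact Finset.sum_pos' (fun w _ => abs_nonneg _)
        ⟨v, Finset.mem_univ v, abs_pos.mpr h⟩
  -- key pointwise bound and sum
  have hkey : ∑ w : V, ((G.degree w : ℝ) - a) ^ 2 ≤ (D - a) * P + (a - E) * N := by
    rw [hP, hN, Finset.mul_sum, Finset.mul_sum, ← Finset.sum_add_distrib]
    refine Finset.sum_le_sum fun w _ => ?_
    obtain ⟨h1, h2⟩ := hdb w
    rcases le_or_gt a ((G.degree w : ℝ)) with h | h
    · rw [max_eq_left (by linarith), max_eq_right (by linarith)]
      nlinarith
    · rw [max_eq_right (by linarith), max_eq_left (by linarith)]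
      nlinarith
  have hPNhalf : P = degS G / 2 ∧ N = degS G / 2 := by constructor <;> linarith
  have hsumsq : ∑ w : V, ((G.degree w : ℝ) - a) ^ 2 ≤ (D - E) * degS G / 2 := by
    rw [hPNhalf.1, hPNhalf.2] at hkey
    linarith
  have hVar : degVar G ≤ (D - E) * degS G / (2 * n) := by
    rw [degVar, ← hn, ← ha]
    have heq : (D - E) * degS G / (2 * n) = (1/n) * ((D - E) * degS G / 2) := by
      rw [div_mul_eq_mul_div, one_mul, div_div]
    rw [heq]
    exact mul_le_mul_of_nonneg_left hsumsq (by positivity)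
  have hDE : (D - E) / (2 * n) < 1 / 2 := by
    rw [div_lt_div_iff₀ (by positivity) two_pos]
    linarith
  refine ⟨?_, ?_, ?_, ?_⟩
  · rw [div_le_iff₀ hSpos]
    calc degVar G ≤ (D - E) * degS G / (2 * n) := hVar
      _ = (D - E) / (2 * n) * degS G := by ring
  · rw [div_le_div_iff₀ (by positivity) (by positivity)]
    have hde : D - E ≤ n - 2 := by linarith
    exact mul_le_mul_of_nonneg_right hde (by positivity)
  · rw [div_lt_div_iff₀ (by positivity) two_pos]
    linarith
  · calc degVar G ≤ (D - E) * degS G / (2 * n) := hVar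
      _ = (D - E) / (2 * n) * degS G := by ring
      _ < (1/2) * degS G := by
          exact mul_lt_mul_of_pos_right hDE hSpos
      _ = degS G / 2 := by ring
end

section
/- Let T be a tree on n ≥ 4 vertices. Then Var(T)/S(T) ≥ 1/(2n), with equality if and only if T is isomorphic to the path P_n. -/
open Finset

lemma down_step {V : Type*} (G : SimpleGraph V) (hc : G.Connected) {a v : V}
    (h : G.dist a v ≠ 0) : ∃ w, G.Adj w v ∧ G.dist a w + 1 = G.dist a v := by
  have hcomm : G.dist v a = G.dist a v := SimpleGraph.dist_comm
  obtain ⟨p, hp⟩ := (hc v a).exists_walk_length_eq_dist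
  cases p with
  | nil => rw [hcomm] at hp; simp at hp; simp at h
  | cons hadj q =>
    rename_i w
    refine ⟨w, hadj.symm, ?_⟩
    simp only [SimpleGraph.Walk.length_cons] at hp
    have h1 : G.dist a w ≤ q.reverse.length := SimpleGraph.dist_le _
    have h2 : G.dist a v ≤ G.dist a w + G.dist w v := hc.dist_triangle
    have h3 : G.dist w v ≤ 1 := by
      have := SimpleGraph.dist_le (SimpleGraph.Walk.cons hadj.symm SimpleGraph.Walk.nil : G.Walk w v)
      simpa using this
    rw [SimpleGraph.Walk.length_reverse] at h1
    omega

lemma level_subsingleton {V : Type*} [Fintype V] [DecidableEq V] (G : SimpleGraph V)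
    [DecidableRel G.Adj] (hc : G.Connected) (hdeg : ∀ v, G.degree v ≤ 2) {a : V}
    (ha : G.degree a = 1) :
    ∀ k : ℕ, ∀ u v : V, G.dist a u = k → G.dist a v = k → u = v := by
  intro k
  induction k using Nat.strong_induction_on with
  | _ k ih =>
    intro u v hu hv
    rcases k with _ | _ | j
    · have h1 : a = u := hc.dist_eq_zero_iff.mp hu
      have h2 : a = v := hc.dist_eq_zero_iff.mp hv
      exact h1 ▸ h2
    ·
      -- u, v adjacent to a
      have hau : G.Adj a u := by rw [← SimpleGraph.dist_eq_one_iff_adj]; exact hu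
      have hav : G.Adj a v := by rw [← SimpleGraph.dist_eq_one_iff_adj]; exact hv
      by_contra hne
      have hsub : {u, v} ⊆ G.neighborFinset a := by
        intro x hx
        simp only [mem_insert, mem_singleton] at hx
        rcases hx with rfl | rfl <;> simp [SimpleGraph.mem_neighborFinset, hau, hav]
      have := Finset.card_le_card hsub
      rw [Finset.card_insert_of_notMem (by simpa using hne), Finset.card_singleton] at this
      rw [SimpleGraph.card_neighborFinset_eq_degree, ha] at this
      omega
    ·
      obtain ⟨wu, hwu, hwu'⟩ := down_step G hc (a := a) (v := u) (by omega)
      obtain ⟨wv, hwv, hwv'⟩ := down_step G hc (a := a) (v := v) (by omega)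
      have hweq : wu = wv := ih (j+1) (by omega) wu wv (by omega) (by omega)
      subst hweq
      obtain ⟨x, hx, hx'⟩ := down_step G hc (a := a) (v := wu) (by omega)
      by_contra hne
      have hxu : x ≠ u := by
        intro h; subst h
        have : G.dist a x = j ∧ G.dist a x = j + 2 := ⟨by omega, hu⟩
        omega
      have hxv : x ≠ v := by
        intro h; subst h
        have : G.dist a x = j ∧ G.dist a x = j + 2 := ⟨by omega, hv⟩
        omega
      have hsub : {x, u, v} ⊆ G.neighborFinset wu := by
        intro y hy
        simp only [mem_insert, mem_singleton] at hy
        rcases hy with rfl | rfl | rfl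
        · simp [SimpleGraph.mem_neighborFinset, hx.symm]
        · simp [SimpleGraph.mem_neighborFinset, hwu]
        · simp [SimpleGraph.mem_neighborFinset, hwv]
      have hcard : ({x, u, v} : Finset V).card = 3 := by
        rw [Finset.card_insert_of_notMem (by simp [hxu, hxv]),
          Finset.card_insert_of_notMem (by simpa using hne), Finset.card_singleton]
      have := Finset.card_le_card hsub
      rw [hcard, SimpleGraph.card_neighborFinset_eq_degree] at this
      have := hdeg wu
      omega

lemma path_iso_of_deg {V : Type*} [Fintype V] [DecidableEq V] (G : SimpleGraph V)
    [DecidableRel G.Adj] (hc : G.Connected) (hdeg : ∀ v, G.degree v ≤ 2) {a : V}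
    (ha : G.degree a = 1) :
    Nonempty (G ≃g SimpleGraph.pathGraph (Fintype.card V)) := by
  have hlt : ∀ v : V, G.dist a v < Fintype.card V := by
    intro v
    obtain ⟨p, hp, hlen⟩ := hc.exists_path_of_dist a v
    rw [← hlen]
    exact hp.length_lt
  set f : V → Fin (Fintype.card V) := fun v => ⟨G.dist a v, hlt v⟩ with hf
  have hinj : Function.Injective f := by
    intro u v huv
    have : G.dist a u = G.dist a v := by
      simpa [hf, Fin.ext_iff] using huv
    exact level_subsingleton G hc hdeg ha (G.dist a u) u v rfl this.symm
  have hbij : Function.Bijective f :=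
    (Fintype.bijective_iff_injective_and_card f).mpr ⟨hinj, by simp⟩
  have hAdj : ∀ u v : V, G.Adj u v ↔
      (G.dist a u + 1 = G.dist a v ∨ G.dist a v + 1 = G.dist a u) := by
    intro u v
    constructor
    · intro h
      have h1 : G.dist a v ≤ G.dist a u + G.dist u v := hc.dist_triangle
      have h2 : G.dist a u ≤ G.dist a v + G.dist v u := hc.dist_triangle
      have h3 : G.dist u v = 1 := SimpleGraph.dist_eq_one_iff_adj.mpr h
      have h4 : G.dist v u = 1 := SimpleGraph.dist_eq_one_iff_adj.mpr h.symm
      have h5 : G.dist a u ≠ G.dist a v := by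
        intro heq
        exact h.ne (level_subsingleton G hc hdeg ha _ u v rfl heq.symm)
      omega
    · intro h
      rcases h with h | h
      · obtain ⟨w, hw, hw'⟩ := down_step G hc (a := a) (v := v) (by omega)
        have : w = u := level_subsingleton G hc hdeg ha (G.dist a u) w u (by omega) rfl
        exact this ▸ hw
      · obtain ⟨w, hw, hw'⟩ := down_step G hc (a := a) (v := u) (by omega)
        have : w = v := level_subsingleton G hc hdeg ha (G.dist a v) w v (by omega) rfl
        exact (this ▸ hw).symm
  refine ⟨⟨Equiv.ofBijective f hbij, ?_⟩⟩
  intro u v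
  rw [SimpleGraph.pathGraph_adj]
  simp only [Equiv.ofBijective_apply, hf]
  rw [hAdj u v]


lemma fin_filter_card_le_two (n : ℕ) (c : ℕ) :
    (Finset.univ.filter (fun j : Fin n => j.val = c + 1 ∨ j.val + 1 = c)).card ≤ 2 := by
  have hinj : Set.InjOn (fun j : Fin n => decide (j.val = c + 1))
      ↑(Finset.univ.filter (fun j : Fin n => j.val = c + 1 ∨ j.val + 1 = c)) := by
    intro x hx y hy hxy
    simp only [Finset.coe_filter, Set.mem_setOf_eq] at hx hy
    simp only [decide_eq_decide] at hxy
    have : x.val = y.val := by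
      rcases hx.2 with h1 | h1 <;> rcases hy.2 with h2 | h2 <;> omega
    exact Fin.ext this
  have := Finset.card_le_card_of_injOn (f := fun j : Fin n => decide (j.val = c + 1))
    (t := (Finset.univ : Finset Bool)) (fun x _ => Finset.mem_univ _) hinj
  simpa using this

lemma deg_le_two_of_iso_path {V : Type*} [Fintype V] [DecidableEq V] {n : ℕ}
    (G : SimpleGraph V) [DecidableRel G.Adj] (e : G ≃g SimpleGraph.pathGraph n) (v : V) :
    G.degree v ≤ 2 := by
  rw [← SimpleGraph.card_neighborFinset_eq_degree]
  have h1 : (G.neighborFinset v).image (fun w => e w) ⊆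
      (Finset.univ.filter (fun j : Fin n => j.val = (e v).val + 1 ∨ j.val + 1 = (e v).val)) := by
    intro j hj
    simp only [Finset.mem_image] at hj
    obtain ⟨w, hw, rfl⟩ := hj
    rw [SimpleGraph.mem_neighborFinset] at hw
    have := e.map_adj_iff.mpr hw
    rw [SimpleGraph.pathGraph_adj] at this
    simp only [Finset.mem_filter, Finset.mem_univ, true_and]
    omega
  calc (G.neighborFinset v).card
      = ((G.neighborFinset v).image (fun w => e w)).card :=
        (Finset.card_image_of_injective _ e.injective).symm
    _ ≤ _ := Finset.card_le_card h1
    _ ≤ 2 := fin_filter_card_le_two n (e v).val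

lemma ptwise (N : ℝ) (hN : 4 ≤ N) (d : ℕ) (hd : 1 ≤ d) :
    0 ≤ ((d:ℝ) - 2*(N-1)/N)^2 - |(d:ℝ) - 2*(N-1)/N|/2 -
      ((2/N - 1/2)*((d:ℝ)-2) + (2/N)^2 - 1/N) ∧
    (((d:ℝ) - 2*(N-1)/N)^2 - |(d:ℝ) - 2*(N-1)/N|/2 -
      ((2/N - 1/2)*((d:ℝ)-2) + (2/N)^2 - 1/N) = 0 ↔ d ≤ 2) := by
  have hN0 : (0:ℝ) < N := by linarith
  rcases Nat.lt_or_ge d 2 with hd2 | hd2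
  · -- d = 1
    have : d = 1 := by omega
    subst this
    have hneg : (1:ℝ) - 2*(N-1)/N ≤ 0 := by
      rw [sub_nonpos, le_div_iff₀ hN0]; nlinarith
    push_cast
    rw [abs_of_nonpos hneg]
    constructor
    · have : (1 - 2*(N-1)/N)^2 - (-(1 - 2*(N-1)/N))/2 -
          ((2/N - 1/2)*(1-2) + (2/N)^2 - 1/N) = 0 := by
        field_simp
        ring
      linarith [this]
    · constructor
      · intro _; norm_num
      · intro _
        field_simp
        ring
  · -- 2 ≤ d
    have hpos : (0:ℝ) ≤ (d:ℝ) - 2*(N-1)/N := by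
      have h2 : (2:ℝ) ≤ (d:ℝ) := by exact_mod_cast hd2
      have : 2*(N-1)/N ≤ 2 := by
        rw [div_le_iff₀ hN0]; nlinarith
      linarith
    rw [abs_of_nonneg hpos]
    have hEq : ((d:ℝ) - 2*(N-1)/N)^2 - ((d:ℝ) - 2*(N-1)/N)/2 -
        ((2/N - 1/2)*((d:ℝ)-2) + (2/N)^2 - 1/N) = ((d:ℝ)-2)*(((d:ℝ)-2) + 2/N) := by
      field_simp
      ring
    rw [hEq]
    have ht : (0:ℝ) ≤ (d:ℝ) - 2 := by
      have : (2:ℝ) ≤ (d:ℝ) := by exact_mod_cast hd2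
      linarith
    have htb : (0:ℝ) < ((d:ℝ)-2) + 2/N := by
      have : (0:ℝ) < 2/N := by positivity
      linarith
    constructor
    · exact mul_nonneg ht (le_of_lt htb)
    · rw [mul_eq_zero]
      constructor
      · rintro (h | h)
        · have : (d:ℝ) = 2 := by linarith
          have : d = 2 := by exact_mod_cast this
          omega
        · linarith
      · intro h
        have : d = 2 := by omega
        subst this
        left; norm_num

theorem stmt14 {V : Type*} [Fintype V] [DecidableEq V] (G : SimpleGraph V)
    [DecidableRel G.Adj] (htree : G.IsTree) (hn : 4 ≤ Fintype.card V) :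
    degVar G / degS G ≥ 1 / (2 * Fintype.card V) ∧
    (degVar G / degS G = 1 / (2 * Fintype.card V) ↔
      Nonempty (G ≃g SimpleGraph.pathGraph (Fintype.card V))) := by
  classical
  have hc : G.Connected := htree.isConnected
  set n := Fintype.card V with hndef
  set N : ℝ := (n : ℝ) with hNdef
  have hN4 : (4:ℝ) ≤ N := by rw [hNdef]; exact_mod_cast hn
  have hN0 : (0:ℝ) < N := by linarith
  have hm : G.edgeFinset.card = n - 1 := by
    have := htree.card_edgeFinset; omega
  have hmcast : (G.edgeFinset.card : ℝ) = N - 1 := by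
    rw [hm, hNdef]; push_cast [Nat.cast_sub (by omega : 1 ≤ n)]; ring
  have hA : 2 * (G.edgeFinset.card : ℝ) / N = 2 * (N - 1) / N := by rw [hmcast]
  have hdeg1 : ∀ v : V, 1 ≤ G.degree v := by
    intro v
    obtain ⟨u, hu⟩ := Fintype.exists_ne_of_one_lt_card (by omega) v
    have hdist : G.dist u v ≠ 0 := by
      rw [SimpleGraph.dist_ne_zero_iff_ne_and_reachable]
      exact ⟨hu, hc u v⟩
    obtain ⟨w, hw, -⟩ := down_step G hc hdist
    have : 0 < G.degree v := (G.degree_pos_iff_exists_adj v).mpr ⟨w, hw.symm⟩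
    omega
  have hsumdegN : ∑ v : V, G.degree v = 2 * n - 2 := by
    rw [G.sum_degrees_eq_twice_card_edges, hm]; omega
  have hsumdeg : ∑ v : V, (G.degree v : ℝ) = 2 * N - 2 := by
    have h1 : ((∑ v : V, G.degree v : ℕ) : ℝ) = ((2 * n - 2 : ℕ) : ℝ) := by
      rw [hsumdegN]
    push_cast [Nat.cast_sub (by omega : 2 ≤ 2 * n)] at h1
    rw [h1, hNdef]
  set A : ℝ := 2 * (G.edgeFinset.card : ℝ) / N with hAdef
  set x : V → ℝ := fun v => (G.degree v : ℝ) - A with hxdef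
  set L : V → ℝ := fun v =>
    (2/N - 1/2) * ((G.degree v : ℝ) - 2) + (2/N)^2 - 1/N with hLdef
  have hterm : ∀ v : V, 0 ≤ (x v)^2 - |x v|/2 - L v ∧
      ((x v)^2 - |x v|/2 - L v = 0 ↔ G.degree v ≤ 2) := by
    intro v
    have h := ptwise N hN4 (G.degree v) (hdeg1 v)
    rw [← hA] at h
    exact h
  have hsumL : ∑ v : V, L v = 0 := by
    have h1 : ∑ v : V, L v = (2/N - 1/2) * (∑ v : V, (G.degree v : ℝ)) +
        (n : ℝ) * ((2/N)^2 - 1/N - 2 * (2/N - 1/2)) := by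
      calc ∑ v : V, L v
          = ∑ v : V, ((2/N - 1/2) * (G.degree v : ℝ) +
              ((2/N)^2 - 1/N - 2 * (2/N - 1/2))) :=
            Finset.sum_congr rfl (fun v _ => by rw [hLdef]; ring)
        _ = _ := by
            rw [Finset.sum_add_distrib, ← Finset.mul_sum, Finset.sum_const,
              Finset.card_univ, nsmul_eq_mul, ← hndef]
    rw [h1, hsumdeg, ← hNdef]
    field_simp
    ring
  set Q : ℝ := ∑ v : V, (x v)^2 with hQdef
  set S : ℝ := ∑ v : V, |x v| with hSdef
  have hsum_split : ∑ v : V, ((x v)^2 - |x v|/2 - L v) = Q - S/2 := by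
    rw [Finset.sum_sub_distrib, Finset.sum_sub_distrib, hsumL, sub_zero,
      ← Finset.sum_div, hQdef, hSdef]
  have hkey : 0 ≤ Q - S/2 := by
    rw [← hsum_split]
    exact Finset.sum_nonneg (fun v _ => (hterm v).1)
  have hkey_iff : (Q - S/2 = 0) ↔ ∀ v : V, G.degree v ≤ 2 := by
    rw [← hsum_split,
      Finset.sum_eq_zero_iff_of_nonneg (fun v _ => (hterm v).1)]
    constructor
    · intro h v; exact (hterm v).2.mp (h v (Finset.mem_univ v))
    · intro h v _; exact (hterm v).2.mpr (h v)
  have hS0 : 0 < S := by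
    obtain ⟨v0⟩ : Nonempty V := Fintype.card_pos_iff.mp (by omega)
    have h1 : 0 < |x v0| := by
      rw [abs_pos]
      show (G.degree v0 : ℝ) - A ≠ 0
      rw [hA, sub_ne_zero]
      rcases Nat.lt_or_ge (G.degree v0) 2 with h | h
      · have hd1 : G.degree v0 = 1 := by have := hdeg1 v0; omega
        rw [hd1]
        intro hEq
        push_cast at hEq
        rw [eq_div_iff hN0.ne'] at hEq
        linarith
      · have h2 : (2:ℝ) ≤ (G.degree v0 : ℝ) := by exact_mod_cast h
        have h3 : 2*(N-1)/N < 2 := by rw [div_lt_iff₀ hN0]; nlinarith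
        intro hEq; linarith [hEq ▸ h3]
    have h2 : |x v0| ≤ S := by
      rw [hSdef]
      exact Finset.single_le_sum (fun v _ => abs_nonneg (x v)) (Finset.mem_univ v0)
    linarith
  have hVar : degVar G = (1/N) * Q := rfl
  have hSeq : degS G = S := rfl
  have hQform : ((1/N) * Q) * (2*N) = 2*Q := by field_simp
  constructor
  · rw [hVar, hSeq, ge_iff_le, div_le_div_iff₀ (by positivity) hS0]
    rw [hQform, one_mul]
    linarith
  · rw [hVar, hSeq, div_eq_div_iff hS0.ne' (by positivity), hQform, one_mul]
    have iff3 : (∀ v : V, G.degree v ≤ 2) ↔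
        Nonempty (G ≃g SimpleGraph.pathGraph n) := by
      constructor
      · intro hd
        have hex : ∃ a : V, G.degree a = 1 := by
          by_contra hno
          push_neg at hno
          have hall : ∀ v : V, G.degree v = 2 := by
            intro v; have := hdeg1 v; have := hd v; have := hno v; omega
          have : ∑ v : V, G.degree v = 2 * n := by
            rw [Finset.sum_congr rfl (fun v _ => hall v), Finset.sum_const,
              Finset.card_univ, ← hndef, smul_eq_mul]
            ring
          omega
        obtain ⟨a, ha⟩ := hex
        exact path_iso_of_deg G hc hd ha
      · rintro ⟨e⟩ v
        exact deg_le_two_of_iso_path G e v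
    constructor
    · intro h
      exact iff3.mp (hkey_iff.mp (by linarith))
    · intro h
      have := hkey_iff.mpr (iff3.mpr h)
      linarith
end

section
/- Let G be a connected graph with n vertices, m edges and cyclomatic number c = m − n + 1 satisfying 1 ≤ c ≤ (n + 2)/2, and maximum degree Δ. Then S(G) = (2/n)·Σ_{i=3}^{Δ} N_i·(i·n − 2m) and Var(G) = (1/n)·Σ_{i=3}^{Δ} N_i·(i − 1)·(i − 2) − 2(2m − n)(m − n)/n². -/
open Finset

/-- Fiberwise sum: a sum over `i ∈ [3, Δ]` of `N_i · f i` equals a sum over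
vertices of degree at least `3`. -/
theorem sumNk {V : Type*} [Fintype V] [DecidableEq V] (G : SimpleGraph V)
    [DecidableRel G.Adj] (f : ℕ → ℝ) :
    ∑ i ∈ Finset.Icc 3 G.maxDegree, (Nk G i : ℝ) * f i
      = ∑ v ∈ Finset.univ.filter (fun v => 3 ≤ G.degree v), f (G.degree v) := by
  rw [← Finset.sum_fiberwise_of_maps_to (g := fun v => G.degree v)
    (t := Finset.Icc 3 G.maxDegree)
    (fun v hv => Finset.mem_Icc.mpr ⟨(Finset.mem_filter.mp hv).2, G.degree_le_maxDegree v⟩)]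
  refine Finset.sum_congr rfl fun i hi => ?_
  have h3 : 3 ≤ i := (Finset.mem_Icc.mp hi).1
  rw [Finset.filter_filter]
  have hfe : Finset.filter (fun a => 3 ≤ G.degree a ∧ G.degree a = i) Finset.univ
      = Finset.filter (fun v : V => G.degree v = i) Finset.univ :=
    Finset.filter_congr (fun v _ => ⟨fun h => h.2, fun h => ⟨h ▸ h3, h⟩⟩)
  rw [hfe, Finset.sum_congr rfl (fun v hv => congrArg f (Finset.mem_filter.mp hv).2),
    Finset.sum_const, nsmul_eq_mul]
  rfl

theorem stmt16 {V : Type*} [Fintype V] [DecidableEq V] (G : SimpleGraph V)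
    [DecidableRel G.Adj] (hconn : G.Connected)
    (hc1 : (1 : ℝ) ≤ (G.edgeFinset.card : ℝ) - Fintype.card V + 1)
    (hc2 : (G.edgeFinset.card : ℝ) - Fintype.card V + 1 ≤ ((Fintype.card V : ℝ) + 2) / 2) :
    degS G = 2 / (Fintype.card V : ℝ) *
      ∑ i ∈ Finset.Icc 3 G.maxDegree, (Nk G i : ℝ) *
        ((i : ℝ) * Fintype.card V - 2 * G.edgeFinset.card) ∧
    degVar G = (1 / (Fintype.card V : ℝ)) *
      (∑ i ∈ Finset.Icc 3 G.maxDegree, (Nk G i : ℝ) * ((i : ℝ) - 1) * ((i : ℝ) - 2)) -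
      2 * (2 * (G.edgeFinset.card : ℝ) - Fintype.card V) *
        ((G.edgeFinset.card : ℝ) - Fintype.card V) / (Fintype.card V : ℝ) ^ 2 := by
  classical
  have hne : Nonempty V := hconn.nonempty
  set n : ℝ := (Fintype.card V : ℝ) with hn
  set m : ℝ := (G.edgeFinset.card : ℝ) with hm
  have hn0 : (0 : ℝ) < n := by
    rw [hn]; exact_mod_cast Fintype.card_pos (α := V)
  have hn1 : (1 : ℝ) ≤ n := by
    rw [hn]; exact_mod_cast Nat.one_le_iff_ne_zero.mpr (Fintype.card_ne_zero (α := V))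
  have hmn : n ≤ m := by linarith
  have hm3 : 2 * m ≤ 3 * n := by linarith
  -- handshake
  have hhs : ∑ v : V, (G.degree v : ℝ) = 2 * m := by
    rw [hm]
    exact_mod_cast congrArg (Nat.cast : ℕ → ℝ) G.sum_degrees_eq_twice_card_edges
  -- minimum degree at least one
  have hdeg1 : ∀ v : V, 1 ≤ G.degree v := by
    intro v
    have hm1 : 1 ≤ G.edgeFinset.card := by
      by_contra h
      push_neg at h
      interval_cases h' : G.edgeFinset.card <;> simp_all <;> linarith
    obtain ⟨e, he⟩ := Finset.card_pos.mp hm1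
    induction e with
    | h a b =>
      have hab : G.Adj a b := (SimpleGraph.mem_edgeFinset.mp he)
      have : ∃ w, w ≠ v := by
        by_cases hav : a = v
        · exact ⟨b, fun hb => G.ne_of_adj hab (hav.trans hb.symm)⟩
        · exact ⟨a, hav⟩
      obtain ⟨w, hwv⟩ := this
      have hr : G.Reachable v w := hconn.preconnected v w
      obtain ⟨p⟩ := hr
      cases p with
      | nil => exact absurd rfl hwv.symm
      | cons h q =>
        exact Nat.one_le_iff_ne_zero.mpr (Nat.pos_iff_ne_zero.mp
          ((SimpleGraph.degree_pos_iff_exists_adj G v).mpr ⟨_, h⟩))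
  set avg : ℝ := 2 * m / n with havg
  have havg2 : 2 ≤ avg := by rw [havg, le_div_iff₀ hn0]; linarith
  have havg3 : avg ≤ 3 := by rw [havg, div_le_iff₀ hn0]; linarith
  set p : V → Prop := fun v => 3 ≤ G.degree v with hp
  have hsplit0 : ∑ v : V, ((G.degree v : ℝ) - avg) = 0 := by
    rw [Finset.sum_sub_distrib, hhs, Finset.sum_const, Finset.card_univ, nsmul_eq_mul,
      ← hn, havg]
    field_simp
    ring
  constructor
  · -- degS
    have habs : ∀ v : V, |(G.degree v : ℝ) - avg| =
        if 3 ≤ G.degree v then ((G.degree v : ℝ) - avg) else (avg - (G.degree v : ℝ)) := by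
      intro v
      by_cases h : 3 ≤ G.degree v
      · rw [if_pos h, abs_of_nonneg]
        have : (3 : ℝ) ≤ (G.degree v : ℝ) := by exact_mod_cast h
        linarith
      · rw [if_neg h, abs_of_nonpos, neg_sub]
        push_neg at h
        have : (G.degree v : ℝ) ≤ 2 := by exact_mod_cast Nat.lt_succ_iff.mp h
        linarith
    have hS : degS G = ∑ v ∈ Finset.univ.filter p, ((G.degree v : ℝ) - avg)
        + ∑ v ∈ Finset.univ.filter (fun v => ¬ p v), (avg - (G.degree v : ℝ)) := by
      rw [degS]
      rw [Finset.sum_congr rfl (fun v _ => habs v), Finset.sum_ite]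
    have hkey : ∑ v ∈ Finset.univ.filter (fun v => ¬ p v), (avg - (G.degree v : ℝ))
        = ∑ v ∈ Finset.univ.filter p, ((G.degree v : ℝ) - avg) := by
      have h1 := Finset.sum_filter_add_sum_filter_not Finset.univ p
        (fun v => ((G.degree v : ℝ) - avg))
      rw [hsplit0] at h1
      have h2 : ∑ v ∈ Finset.univ.filter (fun v => ¬ p v), (avg - (G.degree v : ℝ))
          = - ∑ v ∈ Finset.univ.filter (fun v => ¬ p v), ((G.degree v : ℝ) - avg) := by
        rw [← Finset.sum_neg_distrib]
        exact Finset.sum_congr rfl (fun v _ => by ring)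
      linarith
    rw [hS, hkey, sumNk G (fun i => (i : ℝ) * n - 2 * m), Finset.mul_sum]
    rw [← two_mul]
    rw [Finset.mul_sum]
    refine Finset.sum_congr rfl fun v _ => ?_
    rw [havg]
    field_simp
  · -- degVar
    set s2 : ℝ := ∑ v : V, (G.degree v : ℝ) ^ 2 with hs2
    have e1 : ∑ v : V, ((G.degree v : ℝ) - avg) ^ 2 = s2 - 4 * m ^ 2 / n := by
      have : ∀ v : V, ((G.degree v : ℝ) - avg) ^ 2
          = (G.degree v : ℝ) ^ 2 - (2 * avg) * (G.degree v : ℝ) + avg ^ 2 :=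
        fun v => by ring
      rw [Finset.sum_congr rfl (fun v _ => this v), Finset.sum_add_distrib,
        Finset.sum_sub_distrib, ← Finset.mul_sum, hhs, Finset.sum_const,
        Finset.card_univ, nsmul_eq_mul, ← hn, ← hs2, havg]
      field_simp
      ring
    have e2 : ∑ i ∈ Finset.Icc 3 G.maxDegree, (Nk G i : ℝ) * ((i : ℝ) - 1) * ((i : ℝ) - 2)
        = s2 - 3 * (2 * m) + 2 * n := by
      have ha : ∑ i ∈ Finset.Icc 3 G.maxDegree, (Nk G i : ℝ) * ((i : ℝ) - 1) * ((i : ℝ) - 2)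
          = ∑ v ∈ Finset.univ.filter p, (((G.degree v : ℝ) - 1) * ((G.degree v : ℝ) - 2)) := by
        rw [← sumNk G (fun i => ((i : ℝ) - 1) * ((i : ℝ) - 2))]
        exact Finset.sum_congr rfl fun i _ => by ring
      have hb : ∑ v ∈ Finset.univ.filter (fun v => ¬ p v),
          (((G.degree v : ℝ) - 1) * ((G.degree v : ℝ) - 2)) = 0 := by
        refine Finset.sum_eq_zero fun v hv => ?_
        have hv3 : ¬ 3 ≤ G.degree v := (Finset.mem_filter.mp hv).2
        push_neg at hv3
        have h1 := hdeg1 v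
        interval_cases h : G.degree v <;> norm_num
      have hc := Finset.sum_filter_add_sum_filter_not Finset.univ p
        (fun v => (((G.degree v : ℝ) - 1) * ((G.degree v : ℝ) - 2)))
      rw [hb, add_zero] at hc
      have hd : ∑ v : V, (((G.degree v : ℝ) - 1) * ((G.degree v : ℝ) - 2))
          = s2 - 3 * (2 * m) + 2 * n := by
        have : ∀ v : V, (((G.degree v : ℝ) - 1) * ((G.degree v : ℝ) - 2))
            = (G.degree v : ℝ) ^ 2 - 3 * (G.degree v : ℝ) + 2 := fun v => by ring
        rw [Finset.sum_congr rfl (fun v _ => this v), Finset.sum_add_distrib,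
          Finset.sum_sub_distrib, ← Finset.mul_sum, hhs, Finset.sum_const,
          Finset.card_univ, nsmul_eq_mul, ← hn, ← hs2]
        ring
      rw [ha, hc, hd]
    rw [degVar, e2]
    have : ∑ v : V, ((G.degree v : ℝ) - 2 * (G.edgeFinset.card : ℝ) / (Fintype.card V : ℝ)) ^ 2
        = s2 - 4 * m ^ 2 / n := e1
    rw [← hn, ← hm, this]
    field_simp
    ring
end

section
/- Let G be a connected graph with n vertices, m edges, N₁ ≥ 0 pendent vertices, and cyclomatic number c = m − n + 1 satisfying 1 ≤ c ≤ (n + 2)/2. Then S(G) ≤ 2·(N₁ + 2c − 2), with equality if and only if G is unicyclic (c = 1). -/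
open Finset

theorem stmt19 {V : Type*} [Fintype V] [DecidableEq V] (G : SimpleGraph V)
    [DecidableRel G.Adj] (hconn : G.Connected)
    (hc1 : (1 : ℝ) ≤ (G.edgeFinset.card : ℝ) - Fintype.card V + 1)
    (hc2 : (G.edgeFinset.card : ℝ) - Fintype.card V + 1 ≤ ((Fintype.card V : ℝ) + 2) / 2) :
    degS G ≤ 2 * ((Nk G 1 : ℝ) +
      2 * ((G.edgeFinset.card : ℝ) - Fintype.card V + 1) - 2) ∧
    (degS G = 2 * ((Nk G 1 : ℝ) +
      2 * ((G.edgeFinset.card : ℝ) - Fintype.card V + 1) - 2) ↔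
      G.edgeFinset.card = Fintype.card V) := by
  classical
  have hV : Nonempty V := hconn.nonempty
  set n : ℕ := Fintype.card V with hn
  set m : ℕ := G.edgeFinset.card with hm
  have hn0 : 0 < n := Fintype.card_pos
  have hmn : n ≤ m := by exact_mod_cast (by linarith : (n:ℝ) ≤ m)
  have hm1 : 0 < m := lt_of_lt_of_le hn0 hmn
  obtain ⟨e, he⟩ := Finset.card_pos.mp hm1
  have hnt : Nontrivial V := by
    rw [SimpleGraph.mem_edgeFinset] at he
    induction e with
    | h a b => exact ⟨a, b, (SimpleGraph.mem_edgeSet G).mp he |>.ne⟩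
  have hdeg : ∀ v : V, 1 ≤ G.degree v := by
    intro v
    obtain ⟨w, hw⟩ := exists_ne v
    obtain ⟨p⟩ := hconn.preconnected v w
    rw [Nat.one_le_iff_ne_zero, ← Nat.pos_iff_ne_zero, G.degree_pos_iff_exists_adj]
    cases p with
    | nil => exact absurd rfl (Ne.symm hw)
    | cons h q => exact ⟨_, h⟩
  have hsum : ∑ v : V, (G.degree v : ℝ) = 2 * m := by
    have := G.sum_degrees_eq_twice_card_edges
    push_cast [← this]
    norm_cast
  have hnR : (0:ℝ) < n := by exact_mod_cast hn0
  have hmR : (n:ℝ) ≤ m := by exact_mod_cast hmn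
  have hnD : (n:ℝ) * (2 * m / n) = 2 * m := by field_simp
  have hD2 : 2 ≤ 2 * (m:ℝ) / n := by
    rw [le_div_iff₀ hnR]; linarith
  -- rewrite degS via positive parts
  have key : degS G = 2 * ∑ v : V, max (2 * (m:ℝ) / n - G.degree v) 0 := by
    rw [degS]
    have : ∀ v : V, |(G.degree v : ℝ) - 2 * m / n|
        = 2 * max (2 * (m:ℝ) / n - G.degree v) 0 + ((G.degree v : ℝ) - 2 * m / n) := by
      intro v
      rcases le_or_gt (2 * (m:ℝ) / n) (G.degree v) with h | h
      · rw [max_eq_right (by linarith), abs_of_nonneg (by linarith)]; ring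
      · rw [max_eq_left (by linarith), abs_of_neg (by linarith)]; ring
    rw [Finset.sum_congr rfl (fun v _ => this v), Finset.sum_add_distrib,
      Finset.sum_sub_distrib, hsum, ← Finset.mul_sum]
    simp only [Finset.sum_const, Finset.card_univ, nsmul_eq_mul, ← hn]
    rw [hnD]
    ring
  have hN1 : (Nk G 1 : ℝ) = ∑ v : V, (if G.degree v = 1 then (1:ℝ) else 0) := by
    rw [Finset.sum_boole, Nk]
  have hpt : ∀ v : V, max (2 * (m:ℝ) / n - G.degree v) 0
      ≤ (2 * (m:ℝ) / n - 2) + (if G.degree v = 1 then (1:ℝ) else 0) := by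
    intro v
    by_cases h1 : G.degree v = 1
    · simp only [h1, if_pos, Nat.cast_one]
      rw [max_eq_left (by linarith)]
      linarith
    · have h2 : 2 ≤ G.degree v := by have := hdeg v; omega
      have h2' : (2:ℝ) ≤ G.degree v := by exact_mod_cast h2
      simp only [h1, if_false, add_zero]
      exact max_le (by linarith) (by linarith)
  have hsumbound : ∑ v : V, max (2 * (m:ℝ) / n - G.degree v) 0
      ≤ (Nk G 1 : ℝ) + 2 * m - 2 * n := by
    calc ∑ v : V, max (2 * (m:ℝ) / n - G.degree v) 0
        ≤ ∑ v : V, ((2 * (m:ℝ) / n - 2) + (if G.degree v = 1 then (1:ℝ) else 0)) :=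
          Finset.sum_le_sum (fun v _ => hpt v)
      _ = (n:ℝ) * (2 * m / n - 2) + (Nk G 1 : ℝ) := by
          rw [Finset.sum_add_distrib, ← hN1]
          simp only [Finset.sum_const, Finset.card_univ, nsmul_eq_mul, ← hn]
      _ = (Nk G 1 : ℝ) + 2 * m - 2 * n := by
          rw [mul_sub, hnD]; ring
  have hmain : degS G ≤ 2 * ((Nk G 1 : ℝ) + 2 * ((m:ℝ) - n + 1) - 2) := by
    rw [key]; linarith
  refine ⟨hmain, ?_, ?_⟩
  · -- equality → m = n
    intro heq
    by_contra hne
    have hmn' : n < m := lt_of_le_of_ne hmn (fun h => hne h.symm)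
    have hmR' : (n:ℝ) < m := by exact_mod_cast hmn'
    -- there exists a vertex of degree ≥ 3
    have hex : ∃ v : V, 3 ≤ G.degree v := by
      by_contra hno
      push_neg at hno
      have : ∑ v : V, (G.degree v : ℝ) ≤ ∑ v : V, (2:ℝ) :=
        Finset.sum_le_sum (fun v _ => by
          have := hno v; have : G.degree v ≤ 2 := by omega
          exact_mod_cast this)
      simp only [Finset.sum_const, Finset.card_univ, nsmul_eq_mul, ← hn] at this
      rw [hsum] at this
      linarith
    obtain ⟨w, hw⟩ := hex
    have hw' : (3:ℝ) ≤ G.degree w := by exact_mod_cast hw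
    have hD2' : 2 < 2 * (m:ℝ) / n := by
      rw [lt_div_iff₀ hnR]; linarith
    have hstrict : ∑ v : V, max (2 * (m:ℝ) / n - G.degree v) 0
        < ∑ v : V, ((2 * (m:ℝ) / n - 2) + (if G.degree v = 1 then (1:ℝ) else 0)) := by
      refine Finset.sum_lt_sum (fun v _ => hpt v) ⟨w, Finset.mem_univ w, ?_⟩
      have h1 : G.degree w ≠ 1 := by omega
      simp only [h1, if_false, add_zero]
      exact max_lt (by linarith) (by linarith)
    have : ∑ v : V, ((2 * (m:ℝ) / n - 2) + (if G.degree v = 1 then (1:ℝ) else 0))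
        = (Nk G 1 : ℝ) + 2 * m - 2 * n := by
      rw [Finset.sum_add_distrib, ← hN1]
      simp only [Finset.sum_const, Finset.card_univ, nsmul_eq_mul, ← hn]
      rw [mul_sub, hnD]; ring
    rw [this] at hstrict
    rw [key] at heq
    linarith
  · -- m = n → equality
    intro heq
    have heqR : (m:ℝ) = n := by exact_mod_cast heq
    have hDeq : 2 * (m:ℝ) / n = 2 := by
      rw [heqR]; field_simp
    have : ∀ v : V, max (2 * (m:ℝ) / n - G.degree v) 0
        = (if G.degree v = 1 then (1:ℝ) else 0) := by
      intro v
      rw [hDeq]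
      by_cases h1 : G.degree v = 1
      · simp [h1]; norm_num
      · have h2 : 2 ≤ G.degree v := by have := hdeg v; omega
        have h2' : (2:ℝ) ≤ G.degree v := by exact_mod_cast h2
        simp only [h1, if_false]
        rw [max_eq_right (by linarith)]
    rw [key, Finset.sum_congr rfl (fun v _ => this v), ← hN1, heqR]
    ring
end
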